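/- arXiv:math/0612038 — 7 statements merged into one kernel-verified Lean document; each statement's English description precedes it below -/
import Mathlib

section
/- Let F = (f_i)_{i∈I} be a frame for a complex Hilbert space H and let π : I → I be a bijection with the property that lim_{n→∞} |I_n ∩ π(I_n)| / |I_n| = 1. Then G = (g_i)_{i∈I} with g_i = f_{π(i)} is a frame for H and F ≈ G. -/
open Filter Topology

noncomputable section

/-- A family `f : ι → H` is a frame for the complex Hilbert space `H`. -/
def IsFrame {ι : Type*} {H : Type*} [NormedAddCommGroup H] [InnerProductSpace ℂ H]
    (f : ι → H) : Prop :=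
  ∃ A B : ℝ, 0 < A ∧ 0 < B ∧ ∀ h : H,
    A * ‖h‖ ^ 2 ≤ ∑' i, ‖(inner ℂ h (f i) : ℂ)‖ ^ 2 ∧
    ∑' i, ‖(inner ℂ h (f i) : ℂ)‖ ^ 2 ≤ B * ‖h‖ ^ 2

/-- The frame operator `S h = ∑_i ⟨h, f i⟩ f i` (paper's first-linear convention). -/
def frameOp {ι : Type*} {H : Type*} [NormedAddCommGroup H] [InnerProductSpace ℂ H]
    (f : ι → H) (h : H) : H :=
  ∑' i, (inner ℂ (f i) h : ℂ) • f i

/-- `ftil` is the canonical dual frame of `f`: `S (ftil i) = f i`, i.e. `ftil i = S⁻¹ (f i)`. -/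
def IsCanonicalDual {ι : Type*} {H : Type*} [NormedAddCommGroup H] [InnerProductSpace ℂ H]
    (f ftil : ι → H) : Prop :=
  ∀ i, frameOp f (ftil i) = f i

/-- `b n = ∑_{i ∈ Iₙ} ⟨f i, f̃ i⟩` (a real number; we take the real part). -/
def bSeq {ι : Type*} {H : Type*} [NormedAddCommGroup H] [InnerProductSpace ℂ H]
    (In : ℕ → Finset ι) (f ftil : ι → H) (n : ℕ) : ℝ :=
  (∑ i ∈ In n, (inner ℂ (f i) (ftil i) : ℂ)).re

/-- `x ≈ y` : `(xₙ − yₙ)/|Iₙ| → 0`. -/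
def SeqApprox {ι : Type*} (In : ℕ → Finset ι) (x y : ℕ → ℝ) : Prop :=
  Tendsto (fun n => (x n - y n) / ((In n).card : ℝ)) atTop (nhds 0)

/-!
Reindexing by a bijection changes neither the frame bounds nor the frame operator `S`, so the
canonical dual of `G` is `g̃ᵢ = f̃_{π i}` (`S` is injective) and `b_n(G)` is the sum of
`tⱼ = ⟨fⱼ, f̃ⱼ⟩` over `π(Iₙ)` instead of `Iₙ`. Each `tⱼ = ⟨f̃ⱼ, S f̃ⱼ⟩ = ∑ᵢ |⟨f̃ⱼ, fᵢ⟩|²` is real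
and dominates its own `j`-th term `tⱼ²`, so `0 ≤ tⱼ ≤ 1`. Hence
`|b_n(F) - b_n(G)| ≤ |Iₙ| - |Iₙ ∩ π(Iₙ)| = o(|Iₙ|)`.
-/

open Finset in
lemma abs_sum_sub_sum_le_card_sub_card_inter {ι : Type*} [DecidableEq ι] {s s' : Finset ι}
    (hcard : #s' = #s) {t : ι → ℝ} (ht : ∀ j, t j ∈ Set.Icc 0 1) :
    |∑ j ∈ s, t j - ∑ j ∈ s', t j| ≤ #s - #(s ∩ s') := by
  have hsum_le_card (u : Finset ι) : ∑ j ∈ u, t j ∈ Set.Icc 0 (#u : ℝ) :=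
    ⟨sum_nonneg fun j _ => (ht j).1, by simpa using sum_le_sum fun j (_ : j ∈ u) => (ht j).2⟩
  have hcard_sdiff : (#(s \ s') : ℝ) = #s - #(s ∩ s') := by
    rw [← card_sdiff_add_card_inter s s']; push_cast; ring
  have hcard_sdiff' : (#(s' \ s) : ℝ) = #s - #(s ∩ s') := by
    rw [card_sdiff_comm hcard, hcard_sdiff]
  obtain ⟨h₁, h₁'⟩ := hsum_le_card (s \ s')
  obtain ⟨h₂, h₂'⟩ := hsum_le_card (s' \ s)
  rw [hcard_sdiff] at h₁'
  rw [hcard_sdiff'] at h₂'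
  rw [← sum_sdiff_sub_sum_sdiff, abs_sub_le_iff]
  constructor <;> linarith

lemma tendsto_div_zero_of_abs_le_sub {α : Type*} {l : Filter α} {u c d : α → ℝ}
    (hdc : Tendsto (fun n => d n / c n) l (𝓝 1)) (hu : ∀ n, |u n| ≤ c n - d n) :
    Tendsto (fun n => u n / c n) l (𝓝 0) := by
  have hlim : Tendsto (fun n => ‖1 - d n / c n‖) l (𝓝 0) := by
    simpa using ((tendsto_const_nhds (x := (1 : ℝ))).sub hdc).norm
  refine squeeze_zero_norm (fun n => ?_) hlim
  rcases eq_or_ne (c n) 0 with hc | hc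
  · simp [hc]
  · calc ‖u n / c n‖ = |u n| / |c n| := by rw [Real.norm_eq_abs, abs_div]
      _ ≤ |c n - d n| / |c n| :=
        div_le_div_of_nonneg_right ((hu n).trans (le_abs_self _)) (abs_nonneg _)
      _ = ‖1 - d n / c n‖ := by rw [Real.norm_eq_abs, ← abs_div, sub_div, div_self hc]

section Frame

variable {ι H : Type*} [NormedAddCommGroup H] [InnerProductSpace ℂ H] {f : ι → H}

lemma IsFrame.eq_zero_of_tsum_eq_zero (hf : IsFrame f) {h : H}
    (h0 : ∑' i, ‖(inner ℂ h (f i) : ℂ)‖ ^ 2 = 0) : h = 0 := by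
  obtain ⟨A, B, hA, -, hfr⟩ := hf
  have hle := (hfr h).1
  rw [h0] at hle
  exact norm_eq_zero.1 (pow_eq_zero_iff two_ne_zero |>.1
    (le_antisymm (nonpos_of_mul_nonpos_right hle hA) (sq_nonneg _)))

lemma IsFrame.summable_norm_inner_sq (hf : IsFrame f) (h : H) :
    Summable fun i => ‖(inner ℂ h (f i) : ℂ)‖ ^ 2 := by
  by_contra hs
  have h0 := hf.eq_zero_of_tsum_eq_zero (tsum_eq_zero_of_not_summable hs)
  exact hs (by simp [h0])

lemma norm_sum_smul_sq_le {B : ℝ} (hB0 : 0 ≤ B)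
    (hsum : ∀ h, Summable fun i => ‖(inner ℂ h (f i) : ℂ)‖ ^ 2)
    (hB : ∀ h, ∑' i, ‖(inner ℂ h (f i) : ℂ)‖ ^ 2 ≤ B * ‖h‖ ^ 2) (t : Finset ι) (c : ι → ℂ) :
    ‖∑ i ∈ t, c i • f i‖ ^ 2 ≤ B * ∑ i ∈ t, ‖c i‖ ^ 2 := by
  set x := ∑ i ∈ t, c i • f i
  have hx : ‖x‖ ^ 2 ≤ ∑ i ∈ t, ‖c i‖ * ‖(inner ℂ x (f i) : ℂ)‖ := calc
    ‖x‖ ^ 2 = ‖(inner ℂ x x : ℂ)‖ := by rw [inner_self_eq_norm_sq_to_K]; simp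
    _ = ‖∑ i ∈ t, (starRingEnd ℂ) (c i) * inner ℂ (f i) x‖ := by
      simp only [x, sum_inner, inner_smul_left]
    _ ≤ ∑ i ∈ t, ‖c i‖ * ‖(inner ℂ x (f i) : ℂ)‖ := by
      refine (norm_sum_le _ _).trans_eq (Finset.sum_congr rfl fun i _ => ?_)
      rw [norm_mul, RCLike.norm_conj, norm_inner_symm]
  have hcoef : ∑ i ∈ t, ‖(inner ℂ x (f i) : ℂ)‖ ^ 2 ≤ B * ‖x‖ ^ 2 :=
    ((hsum x).sum_le_tsum t fun i _ => sq_nonneg _).trans (hB x)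
  have hquartic : ‖x‖ ^ 2 * ‖x‖ ^ 2 ≤ (B * ∑ i ∈ t, ‖c i‖ ^ 2) * ‖x‖ ^ 2 := calc
    ‖x‖ ^ 2 * ‖x‖ ^ 2 ≤ (∑ i ∈ t, ‖c i‖ * ‖(inner ℂ x (f i) : ℂ)‖) ^ 2 := by
      rw [← sq]; exact pow_le_pow_left₀ (sq_nonneg _) hx 2
    _ ≤ (∑ i ∈ t, ‖c i‖ ^ 2) * ∑ i ∈ t, ‖(inner ℂ x (f i) : ℂ)‖ ^ 2 :=
      Finset.sum_mul_sq_le_sq_mul_sq t _ _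
    _ ≤ (∑ i ∈ t, ‖c i‖ ^ 2) * (B * ‖x‖ ^ 2) := by gcongr
    _ = (B * ∑ i ∈ t, ‖c i‖ ^ 2) * ‖x‖ ^ 2 := by ring
  rcases (sq_nonneg ‖x‖).eq_or_lt with hx0 | hxpos
  · rw [← hx0]; positivity
  · exact le_of_mul_le_mul_right hquartic hxpos

variable [CompleteSpace H]

lemma IsFrame.summable_inner_smul (hf : IsFrame f) (h : H) :
    Summable fun i => (inner ℂ (f i) h : ℂ) • f i := by
  obtain ⟨A, B, -, hB, hfr⟩ := id hf
  rw [summable_iff_vanishing_norm]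
  intro ε hε
  obtain ⟨s, hs⟩ :=
    summable_iff_vanishing_norm.1 (hf.summable_norm_inner_sq h) (ε ^ 2 / B) (by positivity)
  refine ⟨s, fun t ht => ?_⟩
  have hsmall : ∑ i ∈ t, ‖(inner ℂ (f i) h : ℂ)‖ ^ 2 < ε ^ 2 / B := by
    simpa only [norm_inner_symm] using (Real.le_norm_self _).trans_lt (hs t ht)
  have hsq : ‖∑ i ∈ t, (inner ℂ (f i) h : ℂ) • f i‖ ^ 2 < ε ^ 2 := calc
    _ ≤ B * ∑ i ∈ t, ‖(inner ℂ (f i) h : ℂ)‖ ^ 2 :=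
      norm_sum_smul_sq_le hB.le hf.summable_norm_inner_sq (fun h => (hfr h).2) t _
    _ < B * (ε ^ 2 / B) := by gcongr
    _ = ε ^ 2 := by field_simp
  exact (pow_lt_pow_iff_left₀ (norm_nonneg _) hε.le two_ne_zero).1 hsq

lemma IsFrame.inner_frameOp_self (hf : IsFrame f) (h : H) :
    inner ℂ h (frameOp f h) = ((∑' i, ‖(inner ℂ h (f i) : ℂ)‖ ^ 2 : ℝ) : ℂ) := by
  rw [frameOp, ← innerSL_apply_apply, (innerSL ℂ h).map_tsum (hf.summable_inner_smul h),
    Complex.ofReal_tsum]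
  refine tsum_congr fun i => ?_
  rw [innerSL_apply_apply, inner_smul_right, ← inner_conj_symm, RCLike.conj_mul]
  norm_cast

lemma IsFrame.frameOp_sub (hf : IsFrame f) (x y : H) :
    frameOp f (x - y) = frameOp f x - frameOp f y := by
  simp only [frameOp, inner_sub_right, sub_smul]
  exact (hf.summable_inner_smul x).tsum_sub (hf.summable_inner_smul y)

lemma IsFrame.frameOp_injective (hf : IsFrame f) : Function.Injective (frameOp f) := by
  intro x y hxy
  rw [← sub_eq_zero]
  refine hf.eq_zero_of_tsum_eq_zero ?_
  have h := hf.inner_frameOp_self (x - y)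
  rw [hf.frameOp_sub, hxy, sub_self, inner_zero_right] at h
  exact_mod_cast h.symm

lemma IsCanonicalDual.re_inner_mem_Icc {ftil : ι → H} (hdual : IsCanonicalDual f ftil)
    (hf : IsFrame f) (j : ι) : (inner ℂ (f j) (ftil j) : ℂ).re ∈ Set.Icc 0 1 := by
  set T := ∑' i, ‖(inner ℂ (ftil j) (f i) : ℂ)‖ ^ 2
  have hT : inner ℂ (ftil j) (f j) = (T : ℂ) := by
    rw [← hdual j]; exact hf.inner_frameOp_self _
  have hT0 : 0 ≤ T := tsum_nonneg fun _ => sq_nonneg _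
  have hTsq : T ^ 2 ≤ T := by
    have := (hf.summable_norm_inner_sq (ftil j)).le_tsum j fun _ _ => sq_nonneg _
    rwa [hT, Complex.norm_real, Real.norm_eq_abs, sq_abs] at this
  have hre : (inner ℂ (f j) (ftil j) : ℂ).re = T := by
    rw [← inner_conj_symm, hT, Complex.conj_ofReal, Complex.ofReal_re]
  rw [hre]
  exact ⟨hT0, by nlinarith⟩

end Frame

section Reindex

variable {ι ι' H : Type*} [NormedAddCommGroup H] [InnerProductSpace ℂ H] {f : ι → H}

lemma IsFrame.comp_equiv (hf : IsFrame f) (e : ι' ≃ ι) : IsFrame fun i => f (e i) := by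
  obtain ⟨A, B, hA, hB, hfr⟩ := hf
  refine ⟨A, B, hA, hB, fun h => ?_⟩
  rw [e.tsum_eq fun i => ‖(inner ℂ h (f i) : ℂ)‖ ^ 2]
  exact hfr h

lemma frameOp_comp_equiv (f : ι → H) (e : ι' ≃ ι) : frameOp (fun i => f (e i)) = frameOp f :=
  funext fun h => e.tsum_eq fun i => (inner ℂ (f i) h : ℂ) • f i

lemma IsCanonicalDual.eq_comp_equiv [CompleteSpace H] {ftil : ι → H}
    (hdual : IsCanonicalDual f ftil) (hf : IsFrame f) (e : ι' ≃ ι) {gtil : ι' → H}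
    (hg : IsCanonicalDual (fun i => f (e i)) gtil) : gtil = fun i => ftil (e i) := by
  funext i
  apply hf.frameOp_injective
  rw [← frameOp_comp_equiv f e, hg i, frameOp_comp_equiv, hdual (e i)]

lemma bSeq_eq_sum_re (In : ℕ → Finset ι) (f ftil : ι → H) (n : ℕ) :
    bSeq In f ftil n = ∑ j ∈ In n, (inner ℂ (f j) (ftil j) : ℂ).re :=
  Complex.re_sum _ _

lemma bSeq_comp_perm (In : ℕ → Finset ι) (f ftil : ι → H) (π : Equiv.Perm ι) (n : ℕ) :
    bSeq In (fun i => f (π i)) (fun i => ftil (π i)) n =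
      ∑ j ∈ (In n).map π.toEmbedding, (inner ℂ (f j) (ftil j) : ℂ).re := by
  rw [bSeq_eq_sum_re, Finset.sum_map]
  rfl

end Reindex

theorem stmt3_general {ι : Type*}
    {H : Type*} [NormedAddCommGroup H] [InnerProductSpace ℂ H] [CompleteSpace H]
    (In : ℕ → Finset ι)
    (f ftil : ι → H) (hf : IsFrame f) (hdual : IsCanonicalDual f ftil)
    (π : Equiv.Perm ι)
    (hπ : Tendsto
      (fun n => (((In n : Set ι) ∩ (π '' (In n : Set ι))).ncard : ℝ) / ((In n).card : ℝ))
      atTop (nhds 1)) :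
    IsFrame (fun i => f (π i)) ∧
    ∀ gtil : ι → H, IsCanonicalDual (fun i => f (π i)) gtil →
      SeqApprox In (bSeq In f ftil) (bSeq In (fun i => f (π i)) gtil) := by
  classical
  refine ⟨hf.comp_equiv π, fun gtil hg => ?_⟩
  obtain rfl := hdual.eq_comp_equiv hf π hg
  have hπ' : Tendsto (fun n => ((In n ∩ (In n).map π.toEmbedding).card : ℝ) / (In n).card)
      atTop (𝓝 1) := by
    simpa only [← Set.ncard_coe_finset, Finset.coe_inter, Finset.coe_map,
      Equiv.coe_toEmbedding] using hπ
  refine tendsto_div_zero_of_abs_le_sub hπ' fun n => ?_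
  rw [bSeq_eq_sum_re, bSeq_comp_perm]
  exact abs_sum_sub_sum_le_card_sub_card_inter (Finset.card_map _) (hdual.re_inner_mem_Icc hf)

/-- If `π : I → I` is a bijection with `|Iₙ ∩ π(Iₙ)|/|Iₙ| → 1`, then
`G = (f_{π i})` is a frame for `H` and `F ≈ G`. -/
theorem stmt3 {ι : Type*} [Countable ι] [Infinite ι]
    {H : Type*} [NormedAddCommGroup H] [InnerProductSpace ℂ H] [CompleteSpace H]
    (In : ℕ → Finset ι) (hmono : Monotone In) (hcover : ∀ i : ι, ∃ n, i ∈ In n)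
    (f ftil : ι → H) (hf : IsFrame f) (hdual : IsCanonicalDual f ftil)
    (π : Equiv.Perm ι)
    (hπ : Tendsto
      (fun n => (((In n : Set ι) ∩ (π '' (In n : Set ι))).ncard : ℝ) / ((In n).card : ℝ))
      atTop (nhds 1)) :
    IsFrame (fun i => f (π i)) ∧
    ∀ gtil : ι → H, IsCanonicalDual (fun i => f (π i)) gtil →
      SeqApprox In (bSeq In f ftil) (bSeq In (fun i => f (π i)) gtil) :=
  stmt3_general In f ftil hf hdual π hπ

end
end

section
/- A sequence x = (x_n)_{n≥1} of real numbers belongs to X^ℝ if and only if there exists a constant c ≥ 0 such that |x_1| ≤ c·|I_1| and |x_n − x_{n−1}| ≤ c·(|I_n| − |I_{n−1}|) for all n ≥ 2. -/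
open Filter Topology

noncomputable section

/-- Frame-compatible sequence (index `n : ℕ` corresponds to the paper's `n+1`):
`0 ≤ x₁ ≤ |I₁|` and `0 ≤ xₙ − xₙ₋₁ ≤ |Iₙ| − |Iₙ₋₁|` for `n ≥ 2`. -/
def FrameCompatible {ι : Type*} (In : ℕ → Finset ι) (x : ℕ → ℝ) : Prop :=
  (0 ≤ x 0 ∧ x 0 ≤ ((In 0).card : ℝ)) ∧
  ∀ n : ℕ, 0 ≤ x (n + 1) - x n ∧
    x (n + 1) - x n ≤ ((In (n + 1)).card : ℝ) - ((In n).card : ℝ)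

/-- `X`: the set of frame compatible sequences. -/
def Xset {ι : Type*} (In : ℕ → Finset ι) : Set (ℕ → ℝ) :=
  {x | FrameCompatible In x}

/-- `X⁺ = {c • x : x ∈ X, c ≥ 0}`. -/
def Xplus {ι : Type*} (In : ℕ → Finset ι) : Set (ℕ → ℝ) :=
  {y | ∃ c : ℝ, 0 ≤ c ∧ ∃ x ∈ Xset In, y = c • x}

/-- `X^ℝ = {x − y : x, y ∈ X⁺}`. -/
def XR {ι : Type*} (In : ℕ → Finset ι) : Set (ℕ → ℝ) :=
  {z | ∃ x ∈ Xplus In, ∃ y ∈ Xplus In, z = x - y}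

lemma maxkey (a : ℝ) : max a 0 - max (-a) 0 = a := by
  rcases le_total a 0 with h | h
  · rw [max_eq_right h, max_eq_left (by linarith)]; ring
  · rw [max_eq_left h, max_eq_right (by linarith)]; ring

/-- `x ∈ X^ℝ` iff there is `c ≥ 0` with `|x₁| ≤ c|I₁|` and
`|xₙ − xₙ₋₁| ≤ c(|Iₙ| − |Iₙ₋₁|)` for all `n ≥ 2`. -/
theorem stmt8 {ι : Type*} [Countable ι] [Infinite ι]
    (In : ℕ → Finset ι) (hmono : Monotone In) (hcover : ∀ i : ι, ∃ n, i ∈ In n)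
    (x : ℕ → ℝ) :
    x ∈ XR In ↔
      ∃ c : ℝ, 0 ≤ c ∧ |x 0| ≤ c * ((In 0).card : ℝ) ∧
        ∀ n : ℕ, |x (n + 1) - x n| ≤ c * (((In (n + 1)).card : ℝ) - ((In n).card : ℝ)) := by
  have hd : ∀ n, ((In n).card : ℝ) ≤ ((In (n+1)).card : ℝ) := by
    intro n; exact_mod_cast Finset.card_le_card (hmono (Nat.le_succ n))
  have hI0 : (0:ℝ) ≤ ((In 0).card : ℝ) := by positivity
  constructor
  · rintro ⟨a, ⟨ca, hca, u, hu, rfl⟩, b, ⟨cb, hcb, v, hv, rfl⟩, rfl⟩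
    obtain ⟨⟨hu0, hu0'⟩, hu'⟩ := hu
    obtain ⟨⟨hv0, hv0'⟩, hv'⟩ := hv
    refine ⟨ca + cb, by linarith, ?_, ?_⟩
    · simp only [Pi.sub_apply, Pi.smul_apply, smul_eq_mul]
      rw [abs_sub_le_iff]
      constructor <;> nlinarith
    · intro n
      obtain ⟨h1, h2⟩ := hu' n; obtain ⟨h3, h4⟩ := hv' n
      have hΔ := hd n
      simp only [Pi.sub_apply, Pi.smul_apply, smul_eq_mul]
      rw [abs_sub_le_iff]
      constructor <;> nlinarith
  · rintro ⟨c, hc, h0, hstep⟩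
    set d : ℝ := c + 1 with hdd
    have hd0 : (0:ℝ) < d := by linarith
    set u : ℕ → ℝ := fun n => Nat.rec (max (x 0) 0) (fun k uk => uk + max (x (k+1) - x k) 0) n with hu
    set v : ℕ → ℝ := fun n => Nat.rec (max (-(x 0)) 0) (fun k vk => vk + max (-(x (k+1) - x k)) 0) n with hv
    have hu0 : u 0 = max (x 0) 0 := rfl
    have hv0 : v 0 = max (-(x 0)) 0 := rfl
    have hus : ∀ n, u (n+1) = u n + max (x (n+1) - x n) 0 := fun n => rfl
    have hvs : ∀ n, v (n+1) = v n + max (-(x (n+1) - x n)) 0 := fun n => rfl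
    have huv : ∀ n, u n - v n = x n := by
      intro n
      induction n with
      | zero => rw [hu0, hv0, maxkey]
      | succ k ih =>
        rw [hus, hvs]
        have := maxkey (x (k+1) - x k)
        linarith
    have habs1 : max (x 0) 0 ≤ c * ((In 0).card : ℝ) := le_trans (max_le (le_abs_self _) (by positivity)) h0
    have habs2 : max (-(x 0)) 0 ≤ c * ((In 0).card : ℝ) := le_trans (max_le (by rw [← abs_neg]; exact le_abs_self _) (by positivity)) h0
    have hmemgen : ∀ (w : ℕ → ℝ), w 0 = max (x 0) 0 ∨ w 0 = max (-(x 0)) 0 →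
        (∀ n, w (n+1) - w n = max (x (n+1) - x n) 0 ∨ w (n+1) - w n = max (-(x (n+1) - x n)) 0) →
        w ∈ Xplus In := by
      intro w hw0 hws
      refine ⟨d, le_of_lt hd0, d⁻¹ • w, ⟨⟨?_, ?_⟩, ?_⟩, (smul_inv_smul₀ (ne_of_gt hd0) w).symm⟩
      · simp only [Pi.smul_apply, smul_eq_mul]
        rcases hw0 with h | h <;> rw [h] <;> positivity
      · simp only [Pi.smul_apply, smul_eq_mul]
        rw [inv_mul_le_iff₀ hd0]
        have : w 0 ≤ c * ((In 0).card : ℝ) := by rcases hw0 with h | h <;> rw [h] <;> [exact habs1; exact habs2]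
        nlinarith
      · intro n
        have hb : |x (n+1) - x n| ≤ c * (((In (n+1)).card : ℝ) - ((In n).card : ℝ)) := hstep n
        have hΔ : (0:ℝ) ≤ ((In (n+1)).card : ℝ) - ((In n).card : ℝ) := by linarith [hd n]
        have hle : w (n+1) - w n ≤ c * (((In (n+1)).card : ℝ) - ((In n).card : ℝ)) := by
          rcases hws n with h | h <;> rw [h] <;>
            refine max_le ?_ (by positivity)
          · exact le_trans (le_abs_self _) hb
          · exact le_trans ((abs_neg (x (n+1) - x n)) ▸ le_abs_self _) hb
        have hge : 0 ≤ w (n+1) - w n := by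
          rcases hws n with h | h <;> rw [h] <;> exact le_max_right _ _
        constructor
        · simp only [Pi.smul_apply, smul_eq_mul]
          rw [← mul_sub]; positivity
        · simp only [Pi.smul_apply, smul_eq_mul]
          rw [← mul_sub, inv_mul_le_iff₀ hd0]
          nlinarith
    refine ⟨u, hmemgen u (Or.inl hu0) (fun n => Or.inl (by rw [hus]; ring)),
           v, hmemgen v (Or.inr hv0) (fun n => Or.inr (by rw [hvs]; ring)), ?_⟩
    funext n
    simp only [Pi.sub_apply]
    linarith [huv n]

end
end

section
/- Each of the sets X, X⁺ and X^ℝ is closed under the pointwise lattice operations (x ∧ y)_n = min(x_n, y_n) and (x ∨ y)_n = max(x_n, y_n); consequently each of these sets forms a lattice under these operations. -/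
open Filter Topology

noncomputable section

private lemma step_min' {a a' b b' d : ℝ} (h1 : 0 ≤ a' - a) (h2 : a' - a ≤ d)
    (h3 : 0 ≤ b' - b) (h4 : b' - b ≤ d) :
    0 ≤ min a' b' - min a b ∧ min a' b' - min a b ≤ d := by
  simp only [min_def]; split_ifs <;> constructor <;> linarith

private lemma step_max' {a a' b b' d : ℝ} (h1 : 0 ≤ a' - a) (h2 : a' - a ≤ d)
    (h3 : 0 ≤ b' - b) (h4 : b' - b ≤ d) :
    0 ≤ max a' b' - max a b ∧ max a' b' - max a b ≤ d := by
  simp only [max_def]; split_ifs <;> constructor <;> linarith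

private lemma card_diff_nonneg {ι : Type*} {In : ℕ → Finset ι} (hmono : Monotone In) (n : ℕ) :
    (0:ℝ) ≤ ((In (n+1)).card : ℝ) - ((In n).card : ℝ) := by
  have := Finset.card_le_card (hmono (Nat.le_succ n))
  have : ((In n).card : ℝ) ≤ ((In (n+1)).card : ℝ) := by exact_mod_cast this
  linarith

private lemma Xplus_char {ι : Type*} {In : ℕ → Finset ι} (hmono : Monotone In) (z : ℕ → ℝ) :
    z ∈ Xplus In ↔ ∃ C : ℝ, 0 ≤ C ∧ (0 ≤ z 0 ∧ z 0 ≤ C * ((In 0).card : ℝ)) ∧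
      ∀ n, 0 ≤ z (n+1) - z n ∧
        z (n+1) - z n ≤ C * (((In (n+1)).card : ℝ) - ((In n).card : ℝ)) := by
  constructor
  · rintro ⟨c, hc, x, ⟨⟨hx0, hx0'⟩, hxs⟩, rfl⟩
    refine ⟨c, hc, ⟨?_, ?_⟩, fun n => ⟨?_, ?_⟩⟩
    · simpa using mul_nonneg hc hx0
    · simpa using mul_le_mul_of_nonneg_left hx0' hc
    · have h := (hxs n).1
      simp only [Pi.smul_apply, smul_eq_mul]
      nlinarith
    · have h := (hxs n).2
      simp only [Pi.smul_apply, smul_eq_mul]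
      nlinarith
  · rintro ⟨C, hC, ⟨h0, h0'⟩, hs⟩
    rcases eq_or_lt_of_le hC with h | h
    · have hz : ∀ n, z n = 0 := by
        intro n; induction n with
        | zero => nlinarith
        | succ n ih =>
          have h1 := (hs n).1
          have h2 := (hs n).2
          nlinarith
      refine ⟨0, le_refl 0, (fun _ => 0), ⟨⟨le_refl 0, by positivity⟩,
        fun n => ⟨by simp, by simpa using card_diff_nonneg hmono n⟩⟩, ?_⟩
      funext n; simp [hz n]
    · refine ⟨C, hC, fun n => z n / C, ⟨⟨div_nonneg h0 hC, ?_⟩, fun n => ⟨?_, ?_⟩⟩, ?_⟩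
      · rw [div_le_iff₀ h]; linarith [h0']
      · have h1 := (hs n).1
        have : z (n+1) / C - z n / C = (z (n+1) - z n) / C := by ring
        rw [this]; exact div_nonneg h1 hC
      · have h2 := (hs n).2
        have heq : z (n+1) / C - z n / C = (z (n+1) - z n) / C := by ring
        rw [heq, div_le_iff₀ h]; linarith
      · funext n
        simp only [Pi.smul_apply, smul_eq_mul]
        field_simp

private lemma Xplus_minmax {ι : Type*} {In : ℕ → Finset ι} (hmono : Monotone In)
    {x y : ℕ → ℝ} (hx : x ∈ Xplus In) (hy : y ∈ Xplus In) :
    (fun n => min (x n) (y n)) ∈ Xplus In ∧ (fun n => max (x n) (y n)) ∈ Xplus In := by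
  rw [Xplus_char hmono] at hx hy
  obtain ⟨Cx, hCx, ⟨hx0, hx0'⟩, hxs⟩ := hx
  obtain ⟨Cy, hCy, ⟨hy0, hy0'⟩, hys⟩ := hy
  set C := max Cx Cy with hCdef
  have hC : 0 ≤ C := le_trans hCx (le_max_left _ _)
  have hcard0 : (0:ℝ) ≤ ((In 0).card : ℝ) := by positivity
  have hxb : ∀ n, x (n+1) - x n ≤ C * (((In (n+1)).card : ℝ) - ((In n).card : ℝ)) := by
    intro n
    exact le_trans (hxs n).2
      (mul_le_mul_of_nonneg_right (le_max_left _ _) (card_diff_nonneg hmono n))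
  have hyb : ∀ n, y (n+1) - y n ≤ C * (((In (n+1)).card : ℝ) - ((In n).card : ℝ)) := by
    intro n
    exact le_trans (hys n).2
      (mul_le_mul_of_nonneg_right (le_max_right _ _) (card_diff_nonneg hmono n))
  have hx0'' : x 0 ≤ C * ((In 0).card : ℝ) :=
    le_trans hx0' (mul_le_mul_of_nonneg_right (le_max_left _ _) hcard0)
  have hy0'' : y 0 ≤ C * ((In 0).card : ℝ) :=
    le_trans hy0' (mul_le_mul_of_nonneg_right (le_max_right _ _) hcard0)
  constructor
  · rw [Xplus_char hmono]
    refine ⟨C, hC, ⟨le_min hx0 hy0, le_trans (min_le_left _ _) hx0''⟩, fun n => ?_⟩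
    exact step_min' (hxs n).1 (hxb n) (hys n).1 (hyb n)
  · rw [Xplus_char hmono]
    refine ⟨C, hC, ⟨le_trans hx0 (le_max_left _ _), max_le hx0'' hy0''⟩, fun n => ?_⟩
    exact step_max' (hxs n).1 (hxb n) (hys n).1 (hyb n)

private lemma Xplus_add {ι : Type*} {In : ℕ → Finset ι} (hmono : Monotone In)
    {x y : ℕ → ℝ} (hx : x ∈ Xplus In) (hy : y ∈ Xplus In) : x + y ∈ Xplus In := by
  rw [Xplus_char hmono] at hx hy ⊢
  obtain ⟨Cx, hCx, ⟨hx0, hx0'⟩, hxs⟩ := hx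
  obtain ⟨Cy, hCy, ⟨hy0, hy0'⟩, hys⟩ := hy
  refine ⟨Cx + Cy, by linarith, ⟨?_, ?_⟩, fun n => ⟨?_, ?_⟩⟩
  · simp only [Pi.add_apply]; linarith
  · simp only [Pi.add_apply]; nlinarith
  · have := (hxs n).1; have := (hys n).1
    simp only [Pi.add_apply]; linarith
  · have := (hxs n).2; have := (hys n).2
    simp only [Pi.add_apply]; nlinarith

/-- `X`, `X⁺` and `X^ℝ` are each closed under the pointwise lattice
operations `(x ∧ y)ₙ = min(xₙ, yₙ)` and `(x ∨ y)ₙ = max(xₙ, yₙ)`. -/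
theorem stmt9 {ι : Type*} [Countable ι] [Infinite ι]
    (In : ℕ → Finset ι) (hmono : Monotone In) (hcover : ∀ i : ι, ∃ n, i ∈ In n) :
    (∀ x ∈ Xset In, ∀ y ∈ Xset In,
      (fun n => min (x n) (y n)) ∈ Xset In ∧ (fun n => max (x n) (y n)) ∈ Xset In) ∧
    (∀ x ∈ Xplus In, ∀ y ∈ Xplus In,
      (fun n => min (x n) (y n)) ∈ Xplus In ∧ (fun n => max (x n) (y n)) ∈ Xplus In) ∧
    (∀ x ∈ XR In, ∀ y ∈ XR In,
      (fun n => min (x n) (y n)) ∈ XR In ∧ (fun n => max (x n) (y n)) ∈ XR In) := by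
  refine ⟨?_, ?_, ?_⟩
  · rintro x ⟨⟨hx0, hx0'⟩, hxs⟩ y ⟨⟨hy0, hy0'⟩, hys⟩
    constructor
    · exact ⟨⟨le_min hx0 hy0, le_trans (min_le_left _ _) hx0'⟩,
        fun n => step_min' (hxs n).1 (hxs n).2 (hys n).1 (hys n).2⟩
    · exact ⟨⟨le_trans hx0 (le_max_left _ _), max_le hx0' hy0'⟩,
        fun n => step_max' (hxs n).1 (hxs n).2 (hys n).1 (hys n).2⟩
  · intro x hx y hy
    exact Xplus_minmax hmono hx hy
  · rintro x ⟨a, ha, b, hb, rfl⟩ y ⟨c, hc, d, hd, rfl⟩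
    have had : a + d ∈ Xplus In := Xplus_add hmono ha hd
    have hcb : c + b ∈ Xplus In := Xplus_add hmono hc hb
    have hbd : b + d ∈ Xplus In := Xplus_add hmono hb hd
    constructor
    · refine ⟨fun n => min ((a + d) n) ((c + b) n),
        (Xplus_minmax hmono had hcb).1, b + d, hbd, ?_⟩
      funext n
      simp only [Pi.sub_apply, Pi.add_apply, min_def]
      split_ifs <;> linarith
    · refine ⟨fun n => max ((a + d) n) ((c + b) n),
        (Xplus_minmax hmono had hcb).2, b + d, hbd, ?_⟩
      funext n
      simp only [Pi.sub_apply, Pi.add_apply, max_def]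
      split_ifs <;> linarith

end
end

section
/- Let m : X^ℝ → C(W,ℝ) be a sequence measure function and let x ∈ X^ℝ. Then: (1) if c = lim_{n→∞} x_n/|I_n| exists, then m(x) is the constant function with value c; (2) liminf_{n→∞} x_n/|I_n| ≤ m(x)(w) ≤ limsup_{n→∞} x_n/|I_n| for every w ∈ W; (3) there exist points v, w ∈ W (depending on x) such that m(x)(v) = liminf_{n→∞} x_n/|I_n| and m(x)(w) = limsup_{n→∞} x_n/|I_n|. -/
open Filter Topology

noncomputable section

/-- `y ⪬ x` : `liminf (xₙ − yₙ)/|Iₙ| ≥ 0`. -/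
def SeqLeq {ι : Type*} (In : ℕ → Finset ι) (y x : ℕ → ℝ) : Prop :=
  0 ≤ atTop.liminf fun n => (x n - y n) / ((In n).card : ℝ)

/-- A sequence measure function (modelled as a total map `(ℕ → ℝ) → C(W, ℝ)`,
constrained only on `X^ℝ`, its mathematical domain):
(1) for `x, y ∈ X^ℝ`, `m x = m y ↔ x ≈ y`;
(2) for `x, y ∈ X⁺`, `m x ≤ m y` pointwise iff `x ⪬ y`;
(3) `m i = 1` where `i = (|Iₙ|)ₙ`;
(4) `m` is linear (additive and homogeneous) on `X^ℝ`. -/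
def IsSeqMF {ι : Type*} (In : ℕ → Finset ι) {W : Type*} [TopologicalSpace W]
    (m : (ℕ → ℝ) → C(W, ℝ)) : Prop :=
  (∀ x ∈ XR In, ∀ y ∈ XR In, (m x = m y ↔ SeqApprox In x y)) ∧
  (∀ x ∈ Xplus In, ∀ y ∈ Xplus In, ((∀ w : W, m x w ≤ m y w) ↔ SeqLeq In x y)) ∧
  (m (fun n => ((In n).card : ℝ)) = 1) ∧
  (∀ x ∈ XR In, ∀ y ∈ XR In, m (x + y) = m x + m y) ∧
  (∀ x ∈ XR In, ∀ c : ℝ, m (c • x) = c • m x)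

/-- A sequence measure function is separable if the functions `m x` separate
the points of `W`. -/
def SMFSeparable {ι : Type*} (In : ℕ → Finset ι) {W : Type*} [TopologicalSpace W]
    (m : (ℕ → ℝ) → C(W, ℝ)) : Prop :=
  ∀ v w : W, v ≠ w → ∃ x ∈ XR In, m x v ≠ m x w

/-- A sequence measure function is reducible if its restriction to some proper compact
subset `V ⊊ W` is again a sequence measure function. -/
def SMFReducible {ι : Type*} (In : ℕ → Finset ι) {W : Type*} [TopologicalSpace W]
    (m : (ℕ → ℝ) → C(W, ℝ)) : Prop :=
  ∃ V : Set W, IsCompact V ∧ V ≠ Set.univ ∧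
    IsSeqMF In (fun x => (m x).restrict V)

/-- A sequence measure function is minimal if it is separable and irreducible. -/
def SMFMinimal {ι : Type*} (In : ℕ → Finset ι) {W : Type*} [TopologicalSpace W]
    (m : (ℕ → ℝ) → C(W, ℝ)) : Prop :=
  SMFSeparable In m ∧ ¬ SMFReducible In m


section SMFAux

variable {ι : Type*} {In : ℕ → Finset ι}

lemma smf_le_add_eps {a b : ℝ} (h : ∀ ε : ℝ, 0 < ε → a ≤ b + ε) : a ≤ b := by
  by_contra hc
  push_neg at hc
  have := h ((a - b) / 2) (by linarith)
  linarith

lemma fc_bounds {u : ℕ → ℝ} (hu : FrameCompatible In u) (n : ℕ) :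
    0 ≤ u n ∧ u n ≤ ((In n).card : ℝ) := by
  induction n with
  | zero => exact hu.1
  | succ n ih =>
    obtain ⟨h1, h2⟩ := hu.2 n
    exact ⟨by linarith [ih.1], by linarith [ih.2]⟩

lemma fc_i (hmono : Monotone In) : FrameCompatible In (fun n => ((In n).card : ℝ)) := by
  refine ⟨⟨by positivity, le_rfl⟩, fun n => ?_⟩
  have h : ((In n).card : ℝ) ≤ ((In (n + 1)).card : ℝ) := by
    exact_mod_cast Finset.card_le_card (hmono (Nat.le_succ n))
  exact ⟨by linarith, le_rfl⟩

lemma fc_sub (hmono : Monotone In) {v : ℕ → ℝ} (hv : FrameCompatible In v) :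
    FrameCompatible In (fun n => ((In n).card : ℝ) - v n) := by
  refine ⟨⟨?_, ?_⟩, fun n => ?_⟩
  · show 0 ≤ ((In 0).card : ℝ) - v 0
    linarith [hv.1.2]
  · show ((In 0).card : ℝ) - v 0 ≤ ((In 0).card : ℝ)
    linarith [hv.1.1]
  obtain ⟨h1, h2⟩ := hv.2 n
  constructor
  · show 0 ≤ (((In (n + 1)).card : ℝ) - v (n + 1)) - (((In n).card : ℝ) - v n)
    linarith
  · show (((In (n + 1)).card : ℝ) - v (n + 1)) - (((In n).card : ℝ) - v n)
      ≤ ((In (n + 1)).card : ℝ) - ((In n).card : ℝ)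
    linarith

lemma comb_mem_Xplus (hmono : Monotone In) {c d : ℝ} {u v : ℕ → ℝ}
    (hc : 0 ≤ c) (hd : 0 ≤ d) (hu : FrameCompatible In u) (hv : FrameCompatible In v) :
    (fun n => c * u n + d * v n) ∈ Xplus In := by
  rcases eq_or_lt_of_le (by linarith : (0:ℝ) ≤ c + d) with h | h
  · have hc0 : c = 0 := by linarith
    have hd0 : d = 0 := by linarith
    refine ⟨0, le_rfl, fun n => ((In n).card : ℝ), fc_i hmono, ?_⟩
    funext n
    simp [hc0, hd0]
  · refine ⟨c + d, h.le, fun n => (c * u n + d * v n) / (c + d), ⟨⟨?_, ?_⟩, fun n => ?_⟩, ?_⟩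
    · show (0:ℝ) ≤ (c * u 0 + d * v 0) / (c + d)
      have h1 := (fc_bounds hu 0).1
      have h2 := (fc_bounds hv 0).1
      exact div_nonneg (by nlinarith) h.le
    · show (c * u 0 + d * v 0) / (c + d) ≤ ((In 0).card : ℝ)
      rw [div_le_iff₀ h]
      nlinarith [mul_le_mul_of_nonneg_left hu.1.2 hc, mul_le_mul_of_nonneg_left hv.1.2 hd,
        (fc_bounds hu 0).1, (fc_bounds hv 0).1]
    · obtain ⟨hu1, hu2⟩ := hu.2 n
      obtain ⟨hv1, hv2⟩ := hv.2 n
      have key : (c * u (n+1) + d * v (n+1)) / (c + d) - (c * u n + d * v n) / (c + d)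
          = (c * (u (n+1) - u n) + d * (v (n+1) - v n)) / (c + d) := by ring
      constructor
      · show 0 ≤ (c * u (n+1) + d * v (n+1)) / (c + d) - (c * u n + d * v n) / (c + d)
        rw [key]
        exact div_nonneg (by nlinarith [mul_nonneg hc hu1, mul_nonneg hd hv1]) h.le
      · show (c * u (n+1) + d * v (n+1)) / (c + d) - (c * u n + d * v n) / (c + d)
          ≤ ((In (n+1)).card : ℝ) - ((In n).card : ℝ)
        rw [key, div_le_iff₀ h]
        nlinarith [mul_le_mul_of_nonneg_left hu2 hc, mul_le_mul_of_nonneg_left hv2 hd]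
    · funext n
      show c * u n + d * v n = (c + d) * ((c * u n + d * v n) / (c + d))
      field_simp

lemma zero_mem_Xplus (hmono : Monotone In) : (0 : ℕ → ℝ) ∈ Xplus In :=
  ⟨0, le_rfl, fun n => ((In n).card : ℝ), fc_i hmono, by funext n; simp⟩

lemma i_mem_Xplus (hmono : Monotone In) : (fun n => ((In n).card : ℝ)) ∈ Xplus In :=
  ⟨1, zero_le_one, fun n => ((In n).card : ℝ), fc_i hmono, (one_smul ℝ _).symm⟩

lemma smulI_mem_Xplus (hmono : Monotone In) {c : ℝ} (hc : 0 ≤ c) :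
    (c • fun n => ((In n).card : ℝ)) ∈ Xplus In :=
  ⟨c, hc, fun n => ((In n).card : ℝ), fc_i hmono, rfl⟩

lemma Xplus_subset_XR (hmono : Monotone In) : Xplus In ⊆ XR In :=
  fun y hy => ⟨y, hy, 0, zero_mem_Xplus hmono, (sub_zero y).symm⟩

lemma Xplus_bound {y : ℕ → ℝ} (hy : y ∈ Xplus In) :
    ∃ e : ℝ, 0 ≤ e ∧ ∀ n, 0 ≤ y n ∧ y n ≤ e * ((In n).card : ℝ) := by
  obtain ⟨c, hc, z, hz, rfl⟩ := hy
  refine ⟨c, hc, fun n => ?_⟩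
  have h := fc_bounds (In := In) hz n
  constructor
  · exact mul_nonneg hc h.1
  · exact mul_le_mul_of_nonneg_left h.2 hc

lemma shift_mem_Xplus (hmono : Monotone In) {x : ℕ → ℝ} (hx : x ∈ XR In) :
    ∃ d : ℝ, 0 ≤ d ∧ (x + d • fun n => ((In n).card : ℝ)) ∈ Xplus In := by
  obtain ⟨p, ⟨c, hc, u, hu, rfl⟩, q, ⟨d, hd, v, hv, rfl⟩, rfl⟩ := hx
  refine ⟨d, hd, ?_⟩
  have h := comb_mem_Xplus hmono hc hd hu (fc_sub hmono hv)
  convert h using 1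
  funext n
  show c * u n - d * v n + d * ((In n).card : ℝ) = c * u n + d * (((In n).card : ℝ) - v n)
  ring

lemma card_tendsto [Infinite ι] (hmono : Monotone In) (hcover : ∀ i : ι, ∃ n, i ∈ In n) :
    Tendsto (fun n => ((In n).card : ℝ)) atTop atTop := by
  have h : Tendsto (fun n => (In n).card) atTop atTop := by
    apply Monotone.tendsto_atTop_atTop (fun a b hab => Finset.card_le_card (hmono hab))
    intro b
    classical
    set s : Finset ι := (Finset.range b).image (Infinite.natEmbedding ι) with hs
    have hcard : s.card = b := by
      rw [hs, Finset.card_image_of_injective _ (Infinite.natEmbedding ι).injective,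
        Finset.card_range]
    choose g hg using hcover
    refine ⟨s.sup g, ?_⟩
    calc b = s.card := hcard.symm
      _ ≤ (In (s.sup g)).card :=
        Finset.card_le_card fun i hi => hmono (Finset.le_sup hi) (hg i)
  exact tendsto_natCast_atTop_atTop.comp h

end SMFAux

/-- basic properties of a sequence measure function `m` at `x ∈ X^ℝ`:
(1) if `xₙ/|Iₙ| → c` then `m x` is constantly `c`;
(2) `liminf xₙ/|Iₙ| ≤ m x w ≤ limsup xₙ/|Iₙ|` for all `w`;
(3) both `liminf` and `limsup` are attained as values of `m x`. -/
theorem stmt10 {ι : Type*} [Countable ι] [Infinite ι]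
    (In : ℕ → Finset ι) (hmono : Monotone In) (hcover : ∀ i : ι, ∃ n, i ∈ In n)
    {W : Type*} [TopologicalSpace W] [CompactSpace W] [T2Space W]
    (m : (ℕ → ℝ) → C(W, ℝ)) (hm : IsSeqMF In m)
    (x : ℕ → ℝ) (hx : x ∈ XR In) :
    (∀ c : ℝ, Tendsto (fun n => x n / ((In n).card : ℝ)) atTop (nhds c) →
      ∀ w : W, m x w = c) ∧
    (∀ w : W,
      atTop.liminf (fun n => x n / ((In n).card : ℝ)) ≤ m x w ∧
      m x w ≤ atTop.limsup (fun n => x n / ((In n).card : ℝ))) ∧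
    (∃ v w : W,
      m x v = atTop.liminf (fun n => x n / ((In n).card : ℝ)) ∧
      m x w = atTop.limsup (fun n => x n / ((In n).card : ℝ))) := by

  classical
  obtain ⟨hiff, hord, hone, hadd, hsmul⟩ := hm
  set i : ℕ → ℝ := fun n => ((In n).card : ℝ) with hi_def
  have h1card : ∀ᶠ n in atTop, (1:ℝ) ≤ i n :=
    (card_tendsto hmono hcover).eventually_ge_atTop 1
  have hcard0 : ∀ n, (0:ℝ) ≤ i n := fun n => Nat.cast_nonneg _
  have hiXp : i ∈ Xplus In := i_mem_Xplus hmono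
  have hiXR : i ∈ XR In := Xplus_subset_XR hmono hiXp
  have hmconst : ∀ c : ℝ, ∀ w : W, m (c • i) w = c := by
    intro c w
    rw [hsmul i hiXR c, hone]
    simp
  have h0Xp : (0 : ℕ → ℝ) ∈ Xplus In := zero_mem_Xplus hmono
  have hm0 : ∀ w : W, m 0 w = 0 := by
    intro w
    have h : ((0:ℝ) • i) = (0 : ℕ → ℝ) := by funext n; simp
    rw [← h, hsmul i hiXR 0]
    simp
  obtain ⟨d, hd, hyP⟩ := shift_mem_Xplus hmono hx
  set y : ℕ → ℝ := x + d • i with hy_def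
  have hyXR : y ∈ XR In := Xplus_subset_XR hmono hyP
  have hymx : ∀ w, m y w = m x w + d := by
    intro w
    have h1 : m y = m x + m (d • i) :=
      hadd x hx (d • i) (Xplus_subset_XR hmono (smulI_mem_Xplus hmono hd))
    rw [h1]
    simp only [ContinuousMap.add_apply]
    rw [hmconst d w]
  obtain ⟨e, he, hbnd⟩ := Xplus_bound hyP
  set r' : ℕ → ℝ := fun n => y n / i n with hr'_def
  have hr'0 : ∀ n, 0 ≤ r' n := fun n => div_nonneg (hbnd n).1 (hcard0 n)
  have hr'e : ∀ n, r' n ≤ e := by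
    intro n
    rcases eq_or_lt_of_le (hcard0 n) with h | h
    · show y n / i n ≤ e
      rw [← h, div_zero]
      exact he
    · show y n / i n ≤ e
      rw [div_le_iff₀ h]
      exact (hbnd n).2
  have hb_above : IsBoundedUnder (· ≤ ·) atTop r' := isBoundedUnder_of ⟨e, hr'e⟩
  have hb_below : IsBoundedUnder (· ≥ ·) atTop r' := isBoundedUnder_of ⟨0, hr'0⟩
  have hcob_le : IsCoboundedUnder (· ≤ ·) atTop r' := hb_below.isCoboundedUnder_le
  have hcob_ge : IsCoboundedUnder (· ≥ ·) atTop r' := hb_above.isCoboundedUnder_ge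
  have hL'0 : (0:ℝ) ≤ atTop.liminf r' :=
    le_liminf_of_le hcob_ge (Eventually.of_forall hr'0)
  have hev_eq : ∀ᶠ n in atTop, x n / ((In n).card : ℝ) = r' n + (-d) := by
    filter_upwards [h1card] with n hn
    have h0 : i n ≠ 0 := by
      have : (0:ℝ) < i n := by linarith
      exact ne_of_gt this
    show x n / i n = (x n + d * i n) / i n + (-d)
    rw [add_div, mul_div_assoc, div_self h0, mul_one]
    ring
  have hlimsup_r : atTop.limsup (fun n => x n / ((In n).card : ℝ)) = atTop.limsup r' - d := by
    rw [limsup_congr (u := fun n => x n / ((In n).card : ℝ)) (v := fun n => r' n + (-d)) hev_eq,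
      limsup_add_const atTop r' (-d) hb_above hcob_le]
    ring
  have hliminf_r : atTop.liminf (fun n => x n / ((In n).card : ℝ)) = atTop.liminf r' - d := by
    rw [liminf_congr (u := fun n => x n / ((In n).card : ℝ)) (v := fun n => r' n + (-d)) hev_eq,
      liminf_add_const atTop r' (-d) hcob_ge hb_below]
    ring
  -- claim A : m y w ≤ limsup r'
  have claimA : ∀ w : W, m y w ≤ atTop.limsup r' := by
    intro w
    apply smf_le_add_eps
    intro ε hε
    have hU'0 : (0:ℝ) ≤ atTop.limsup r' := hL'0.trans (liminf_le_limsup hb_above hb_below)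
    have hmem : ((atTop.limsup r' + ε) • i) ∈ Xplus In := smulI_mem_Xplus hmono (by linarith)
    have hseq : SeqLeq In y ((atTop.limsup r' + ε) • i) := by
      show 0 ≤ atTop.liminf fun n =>
        (((atTop.limsup r' + ε) • i) n - y n) / ((In n).card : ℝ)
      have hlt : ∀ᶠ n in atTop, r' n < atTop.limsup r' + ε :=
        eventually_lt_of_limsup_lt (by linarith) hb_above
      have heq : ∀ᶠ n in atTop,
          (((atTop.limsup r' + ε) • i) n - y n) / ((In n).card : ℝ)
            = (atTop.limsup r' + ε) - r' n := by
        filter_upwards [h1card] with n hn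
        have h0 : i n ≠ 0 := ne_of_gt (by linarith)
        show ((atTop.limsup r' + ε) * i n - y n) / i n = (atTop.limsup r' + ε) - y n / i n
        rw [sub_div, mul_div_assoc, div_self h0, mul_one]
      apply le_liminf_of_le
      · apply isCoboundedUnder_ge_of_eventually_le atTop (x := atTop.limsup r' + ε)
        filter_upwards [heq] with n hn
        rw [hn]
        linarith [hr'0 n]
      · filter_upwards [heq, hlt] with n hn1 hn2
        rw [hn1]
        linarith
    have hle := (hord y hyP _ hmem).mpr hseq w
    calc m y w ≤ m ((atTop.limsup r' + ε) • i) w := hle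
      _ = atTop.limsup r' + ε := hmconst _ w
  -- claim B : liminf r' ≤ m y w
  have claimB : ∀ w : W, atTop.liminf r' ≤ m y w := by
    intro w
    apply smf_le_add_eps
    intro ε hε
    have key : atTop.liminf r' - ε ≤ m y w := by
      rcases le_or_gt 0 (atTop.liminf r' - ε) with hLε | hLε
      · have hmem : ((atTop.liminf r' - ε) • i) ∈ Xplus In := smulI_mem_Xplus hmono hLε
        have hseq : SeqLeq In ((atTop.liminf r' - ε) • i) y := by
          show 0 ≤ atTop.liminf fun n =>
            (y n - ((atTop.liminf r' - ε) • i) n) / ((In n).card : ℝ)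
          have hgt : ∀ᶠ n in atTop, atTop.liminf r' - ε < r' n :=
            eventually_lt_of_lt_liminf (by linarith) hb_below
          have heq : ∀ᶠ n in atTop,
              (y n - ((atTop.liminf r' - ε) • i) n) / ((In n).card : ℝ)
                = r' n - (atTop.liminf r' - ε) := by
            filter_upwards [h1card] with n hn
            have h0 : i n ≠ 0 := ne_of_gt (by linarith)
            show (y n - (atTop.liminf r' - ε) * i n) / i n
              = y n / i n - (atTop.liminf r' - ε)
            rw [sub_div, mul_div_assoc, div_self h0, mul_one]
          apply le_liminf_of_le
          · apply isCoboundedUnder_ge_of_eventually_le atTop (x := e - (atTop.liminf r' - ε))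
            filter_upwards [heq] with n hn
            rw [hn]
            linarith [hr'e n]
          · filter_upwards [heq, hgt] with n hn1 hn2
            rw [hn1]
            linarith
        have hle := (hord _ hmem y hyP).mpr hseq w
        calc atTop.liminf r' - ε = m ((atTop.liminf r' - ε) • i) w := (hmconst _ w).symm
          _ ≤ m y w := hle
      · have hseq : SeqLeq In 0 y := by
          show 0 ≤ atTop.liminf fun n => (y n - (0 : ℕ → ℝ) n) / ((In n).card : ℝ)
          apply le_liminf_of_le
          · apply isCoboundedUnder_ge_of_eventually_le atTop (x := e)
            apply Eventually.of_forall
            intro n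
            show (y n - 0) / i n ≤ e
            rw [sub_zero]
            exact hr'e n
          · apply Eventually.of_forall
            intro n
            show 0 ≤ (y n - 0) / i n
            rw [sub_zero]
            exact hr'0 n
        have hle := (hord 0 h0Xp y hyP).mpr hseq w
        have h0w := hm0 w
        linarith
    linarith
  -- claim C : pointwise upper bound gives bound on limsup
  have claimC : ∀ M : ℝ, 0 ≤ M → (∀ w : W, m y w ≤ M) → atTop.limsup r' ≤ M := by
    intro M hM0 hub
    have hseq : SeqLeq In y (M • i) :=
      (hord y hyP (M • i) (smulI_mem_Xplus hmono hM0)).mp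
        (fun w => by rw [hmconst M w]; exact hub w)
    have h2 : 0 ≤ atTop.liminf fun n => (M * i n - y n) / ((In n).card : ℝ) := hseq
    have heq : ∀ᶠ n in atTop, (M * i n - y n) / ((In n).card : ℝ) = M - r' n := by
      filter_upwards [h1card] with n hn
      have h0 : i n ≠ 0 := ne_of_gt (by linarith)
      show (M * i n - y n) / i n = M - y n / i n
      rw [sub_div, mul_div_assoc, div_self h0, mul_one]
    rw [liminf_congr (u := fun n => (M * i n - y n) / ((In n).card : ℝ))
      (v := fun n => M - r' n) heq] at h2
    apply smf_le_add_eps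
    intro ε hε
    have hb2 : IsBoundedUnder (· ≥ ·) atTop (fun n => M - r' n) :=
      isBoundedUnder_of ⟨M - e, fun n => by
        show M - r' n ≥ M - e
        linarith [hr'e n]⟩
    have hev : ∀ᶠ n in atTop, -ε < M - r' n :=
      eventually_lt_of_lt_liminf (lt_of_lt_of_le (by linarith) h2) hb2
    apply limsup_le_of_le hcob_le
    filter_upwards [hev] with n hn
    linarith
  -- claim D : pointwise lower bound gives bound on liminf
  have claimD : ∀ M : ℝ, (∀ w : W, M ≤ m y w) → M ≤ atTop.liminf r' := by
    intro M hlb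
    rcases le_or_gt M 0 with hM0 | hM0
    · linarith
    · have hseq : SeqLeq In (M • i) y :=
        (hord (M • i) (smulI_mem_Xplus hmono hM0.le) y hyP).mp
          (fun w => by rw [hmconst M w]; exact hlb w)
      have h2 : 0 ≤ atTop.liminf fun n => (y n - M * i n) / ((In n).card : ℝ) := hseq
      have heq : ∀ᶠ n in atTop, (y n - M * i n) / ((In n).card : ℝ) = r' n - M := by
        filter_upwards [h1card] with n hn
        have h0 : i n ≠ 0 := ne_of_gt (by linarith)
        show (y n - M * i n) / i n = y n / i n - M
        rw [sub_div, mul_div_assoc, div_self h0, mul_one]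
      rw [liminf_congr (u := fun n => (y n - M * i n) / ((In n).card : ℝ))
        (v := fun n => r' n - M) heq] at h2
      apply smf_le_add_eps
      intro ε hε
      have hb2 : IsBoundedUnder (· ≥ ·) atTop (fun n => r' n - M) :=
        isBoundedUnder_of ⟨-M, fun n => by
          show r' n - M ≥ -M
          linarith [hr'0 n]⟩
      have hev : ∀ᶠ n in atTop, -ε < r' n - M :=
        eventually_lt_of_lt_liminf (lt_of_lt_of_le (by linarith) h2) hb2
      have hlim : M - ε ≤ atTop.liminf r' := by
        apply le_liminf_of_le hcob_ge
        filter_upwards [hev] with n hn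
        linarith
      linarith
  -- W is nonempty
  have hWne : Nonempty W := by
    by_contra hW
    have hempty : IsEmpty W := not_nonempty_iff.mp hW
    have hseq : SeqLeq In i 0 :=
      (hord i hiXp 0 h0Xp).mp (fun w => hempty.elim w)
    have h2 : 0 ≤ atTop.liminf fun n => ((0 : ℕ → ℝ) n - i n) / ((In n).card : ℝ) := hseq
    have heq : ∀ᶠ n in atTop,
        ((0 : ℕ → ℝ) n - i n) / ((In n).card : ℝ) = (-1 : ℝ) := by
      filter_upwards [h1card] with n hn
      have h0 : i n ≠ 0 := ne_of_gt (by linarith)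
      show ((0:ℝ) - i n) / i n = -1
      rw [zero_sub, neg_div, div_self h0]
    rw [liminf_congr (u := fun n => ((0 : ℕ → ℝ) n - i n) / ((In n).card : ℝ))
      (v := fun _ => (-1 : ℝ)) heq, liminf_const (-1 : ℝ)] at h2
    linarith
  -- part 2
  have part2 : ∀ w : W,
      atTop.liminf (fun n => x n / ((In n).card : ℝ)) ≤ m x w ∧
      m x w ≤ atTop.limsup (fun n => x n / ((In n).card : ℝ)) := by
    intro w
    have h1 := claimB w
    have h2 := claimA w
    have h3 := hymx w
    constructor
    · rw [hliminf_r]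
      linarith
    · rw [hlimsup_r]
      linarith
  refine ⟨?_, part2, ?_⟩
  · intro c hc w
    have hli : atTop.liminf (fun n => x n / ((In n).card : ℝ)) = c := hc.liminf_eq
    have hls : atTop.limsup (fun n => x n / ((In n).card : ℝ)) = c := hc.limsup_eq
    have h := part2 w
    rw [hli] at h
    rw [hls] at h
    linarith [h.1, h.2]
  · haveI := hWne
    obtain ⟨w₀, -, hw₀⟩ :=
      isCompact_univ.exists_isMaxOn Set.univ_nonempty (m x).continuous.continuousOn
    obtain ⟨w₁, -, hw₁⟩ :=
      isCompact_univ.exists_isMinOn Set.univ_nonempty (m x).continuous.continuousOn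
    refine ⟨w₁, w₀, ?_, ?_⟩
    · rw [hliminf_r]
      have h1 : atTop.liminf r' ≤ m y w₁ := claimB w₁
      have h2 : m y w₁ ≤ atTop.liminf r' := by
        apply claimD
        intro w
        have hmin : (m x) w₁ ≤ (m x) w := hw₁ (Set.mem_univ w)
        have e1 := hymx w
        have e2 := hymx w₁
        linarith
      have h3 := hymx w₁
      linarith
    · rw [hlimsup_r]
      have h1 : m y w₀ ≤ atTop.limsup r' := claimA w₀
      have h2 : atTop.limsup r' ≤ m y w₀ := by
        apply claimC (m y w₀)
        · linarith [hL'0, claimB w₀]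
        · intro w
          have hmax : (m x) w ≤ (m x) w₀ := hw₀ (Set.mem_univ w)
          have e1 := hymx w
          have e2 := hymx w₀
          linarith
      have h3 := hymx w₀
      linarith

end
end

section
/- Let m : X^ℝ → C(W,ℝ) be a sequence measure function and let p be a free ultrafilter on ℕ. Then there exists a point w_p ∈ W such that m(x)(w_p) = p-lim_{n} x_n/|I_n| for every x ∈ X^ℝ. -/
open Filter Topology

noncomputable section

/-- The limit of a real sequence along an ultrafilter `p` on `ℕ`. -/
def ulim (p : Ultrafilter ℕ) (x : ℕ → ℝ) : ℝ :=
  limUnder (p : Filter ℕ) x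

/-- A free ultrafilter contains no finite set, i.e. is finer than `cofinite`. -/
def Ultrafilter.IsFree (p : Ultrafilter ℕ) : Prop :=
  (p : Filter ℕ) ≤ Filter.cofinite


namespace Stmt11Aux

variable {ι : Type*} {In : ℕ → Finset ι}

/-- the cardinality sequence, as reals -/
def ic (In : ℕ → Finset ι) (n : ℕ) : ℝ := ((In n).card : ℝ)

lemma ic_nonneg (n : ℕ) : 0 ≤ ic In n := Nat.cast_nonneg _

lemma ic_mono (hmono : Monotone In) : Monotone (ic In) :=
  fun a b h => Nat.cast_le.mpr (Finset.card_le_card (hmono h))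

/-- two-sided growth bound relative to `ic` -/
def BddXR (In : ℕ → Finset ι) (C : ℝ) (z : ℕ → ℝ) : Prop :=
  |z 0| ≤ C * ic In 0 ∧ ∀ n, |z (n+1) - z n| ≤ C * (ic In (n+1) - ic In n)

lemma BddXR.mono (hmono : Monotone In) {C C' : ℝ} {z : ℕ → ℝ}
    (h : BddXR In C z) (hle : C ≤ C') : BddXR In C' z := by
  refine ⟨h.1.trans ?_, fun n => (h.2 n).trans ?_⟩
  · exact mul_le_mul_of_nonneg_right hle (ic_nonneg 0)
  · exact mul_le_mul_of_nonneg_right hle (sub_nonneg.mpr (ic_mono hmono (Nat.le_succ n)))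

lemma BddXR.abs_le {C : ℝ} {z : ℕ → ℝ} (h : BddXR In C z) (n : ℕ) :
    |z n| ≤ C * ic In n := by
  induction n with
  | zero => exact h.1
  | succ n ih =>
    have h2 := h.2 n
    calc |z (n+1)| = |z n + (z (n+1) - z n)| := by ring_nf
    _ ≤ |z n| + |z (n+1) - z n| := abs_add_le _ _
    _ ≤ C * ic In n + C * (ic In (n+1) - ic In n) := add_le_add ih h2
    _ = C * ic In (n+1) := by ring

lemma BddXR.subf {C D : ℝ} {x y : ℕ → ℝ} (hx : BddXR In C x) (hy : BddXR In D y) :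
    BddXR In (C + D) (fun n => x n - y n) := by
  constructor
  · calc |x 0 - y 0| ≤ |x 0| + |y 0| := abs_sub _ _
    _ ≤ C * ic In 0 + D * ic In 0 := add_le_add hx.1 hy.1
    _ = (C + D) * ic In 0 := by ring
  · intro n
    have : x (n+1) - y (n+1) - (x n - y n) = (x (n+1) - x n) - (y (n+1) - y n) := by ring
    rw [this]
    calc |(x (n+1) - x n) - (y (n+1) - y n)| ≤ |x (n+1) - x n| + |y (n+1) - y n| := abs_sub _ _
    _ ≤ C * (ic In (n+1) - ic In n) + D * (ic In (n+1) - ic In n) := add_le_add (hx.2 n) (hy.2 n)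
    _ = (C + D) * (ic In (n+1) - ic In n) := by ring

lemma BddXR.smulf {C c : ℝ} {x : ℕ → ℝ} (hx : BddXR In C x) :
    BddXR In (|c| * C) (fun n => c * x n) := by
  constructor
  · rw [abs_mul, mul_assoc]; exact mul_le_mul_of_nonneg_left hx.1 (abs_nonneg c)
  · intro n
    have : c * x (n+1) - c * x n = c * (x (n+1) - x n) := by ring
    rw [this, abs_mul, mul_assoc]
    exact mul_le_mul_of_nonneg_left (hx.2 n) (abs_nonneg c)

lemma bdd_ic (hmono : Monotone In) : BddXR In 1 (fun n => ic In n) := by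
  constructor
  · rw [abs_of_nonneg (ic_nonneg 0), one_mul]
  · intro n
    rw [abs_of_nonneg (sub_nonneg.mpr (ic_mono hmono (Nat.le_succ n))), one_mul]

lemma mem_Xplus_of {C : ℝ} (hC : 0 < C) {u : ℕ → ℝ}
    (h0 : 0 ≤ u 0) (h0' : u 0 ≤ C * ic In 0)
    (hstep : ∀ n, 0 ≤ u (n+1) - u n ∧ u (n+1) - u n ≤ C * (ic In (n+1) - ic In n)) :
    u ∈ Xplus In := by
  refine ⟨C, hC.le, fun n => u n / C, ⟨⟨?_, ?_⟩, fun n => ⟨?_, ?_⟩⟩, ?_⟩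
  · positivity
  · rw [div_le_iff₀ hC]; have : C * ic In 0 = ic In 0 * C := by ring
    exact h0'.trans this.le
  · rw [← sub_div]; exact div_nonneg (hstep n).1 hC.le
  · rw [← sub_div, div_le_iff₀ hC]
    have := (hstep n).2
    calc u (n+1) - u n ≤ C * (ic In (n+1) - ic In n) := this
    _ = (ic In (n+1) - ic In n) * C := by ring
  · funext n
    simp only [Pi.smul_apply, smul_eq_mul]
    field_simp

lemma ic_frameCompatible (hmono : Monotone In) : FrameCompatible In (fun n => ic In n) :=
  ⟨⟨ic_nonneg 0, le_refl _⟩, fun n =>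
    ⟨sub_nonneg.mpr (ic_mono hmono (Nat.le_succ n)), le_refl _⟩⟩

lemma smul_ic_mem_Xplus (hmono : Monotone In) {c : ℝ} (hc : 0 ≤ c) :
    (fun n => c * ic In n) ∈ Xplus In := by
  refine ⟨c, hc, fun n => ic In n, ic_frameCompatible hmono, ?_⟩
  funext n; simp [smul_eq_mul]

lemma mem_XR_of_bdd (hmono : Monotone In) {C : ℝ} (hC : 0 < C) {z : ℕ → ℝ}
    (hz : BddXR In C z) : z ∈ XR In := by
  set u : ℕ → ℝ := fun n => max (z 0) 0 + ∑ k ∈ Finset.range n, max (z (k+1) - z k) 0 with hu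
  set v : ℕ → ℝ := fun n => max (-(z 0)) 0 + ∑ k ∈ Finset.range n, max (-(z (k+1) - z k)) 0 with hv
  have key : ∀ a : ℝ, max a 0 - max (-a) 0 = a := by
    intro a; rcases le_total a 0 with h | h
    · rw [max_eq_right h, max_eq_left (by linarith)]; ring
    · rw [max_eq_left h, max_eq_right (by linarith)]; ring
  have habs : ∀ a : ℝ, max a 0 ≤ |a| := fun a => max_le (le_abs_self a) (abs_nonneg a)
  have hicd : ∀ n, 0 ≤ ic In (n+1) - ic In n :=
    fun n => sub_nonneg.mpr (ic_mono hmono (Nat.le_succ n))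
  have hu0 : u 0 = max (z 0) 0 := by simp [hu]
  have hv0 : v 0 = max (-(z 0)) 0 := by simp [hv]
  have hus : ∀ n, u (n+1) - u n = max (z (n+1) - z n) 0 := by
    intro n; simp [hu, Finset.sum_range_succ]
  have hvs : ∀ n, v (n+1) - v n = max (-(z (n+1) - z n)) 0 := by
    intro n; simp [hv, Finset.sum_range_succ]
  have huX : u ∈ Xplus In := by
    refine mem_Xplus_of hC (by rw [hu0]; exact le_max_right _ _) ?_ ?_
    · rw [hu0]; exact (habs _).trans hz.1
    · intro n; rw [hus]
      exact ⟨le_max_right _ _, (habs _).trans (hz.2 n)⟩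
  have hvX : v ∈ Xplus In := by
    refine mem_Xplus_of hC (by rw [hv0]; exact le_max_right _ _) ?_ ?_
    · rw [hv0]; exact (habs _).trans ((abs_neg (z 0)) ▸ hz.1)
    · intro n; rw [hvs]
      refine ⟨le_max_right _ _, (habs _).trans ?_⟩
      rw [abs_neg]; exact hz.2 n
  refine ⟨u, huX, v, hvX, ?_⟩
  funext n
  show z n = u n - v n
  have : u n - v n = (max (z 0) 0 - max (-(z 0)) 0) +
      ∑ k ∈ Finset.range n, (max (z (k+1) - z k) 0 - max (-(z (k+1) - z k)) 0) := by
    simp only [hu, hv, Finset.sum_sub_distrib]; ring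
  rw [this, key]
  have : ∑ k ∈ Finset.range n, (max (z (k+1) - z k) 0 - max (-(z (k+1) - z k)) 0)
      = ∑ k ∈ Finset.range n, (z (k+1) - z k) := Finset.sum_congr rfl (fun k _ => key _)
  rw [this, Finset.sum_range_sub]
  ring

lemma bdd_of_mem_XR {z : ℕ → ℝ} (hz : z ∈ XR In) : ∃ C, 0 < C ∧ BddXR In C z := by
  obtain ⟨a, ⟨c, hc, x, hx, hax⟩, b, ⟨d, hd, y, hy, hby⟩, hzab⟩ := hz
  refine ⟨c + d + 1, by linarith, ?_, ?_⟩
  · have h1 : z 0 = c * x 0 - d * y 0 := by rw [hzab, hax, hby]; simp [smul_eq_mul]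
    rw [h1, abs_le]
    have hx0 := hx.1
    have hy0 := hy.1
    have hic := ic_nonneg (In := In) 0
    simp only [ic] at *
    constructor
    · nlinarith [hx0.1, hx0.2, hy0.1, hy0.2]
    · nlinarith [hx0.1, hx0.2, hy0.1, hy0.2]
  · intro n
    have h1 : z (n+1) - z n = c * (x (n+1) - x n) - d * (y (n+1) - y n) := by
      rw [hzab, hax, hby]; simp [smul_eq_mul]; ring
    rw [h1, abs_le]
    have hxn := hx.2 n
    have hyn := hy.2 n
    simp only [ic] at *
    constructor
    · nlinarith [hxn.1, hxn.2, hyn.1, hyn.2]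
    · nlinarith [hxn.1, hxn.2, hyn.1, hyn.2]

lemma mem_XR_of_bdd' (hmono : Monotone In) {C : ℝ} (hC : 0 ≤ C) {z : ℕ → ℝ}
    (hz : BddXR In C z) : z ∈ XR In :=
  mem_XR_of_bdd hmono (show (0:ℝ) < C + 1 by linarith) (hz.mono hmono (by linarith))

lemma ratio_abs_le {C : ℝ} {z : ℕ → ℝ} (hz : BddXR In C z) (hC : 0 ≤ C) (n : ℕ) :
    |z n / ic In n| ≤ C := by
  rcases eq_or_lt_of_le (ic_nonneg (In := In) n) with h | h
  · have : |z n| ≤ 0 := by have := hz.abs_le n; rw [← h] at this; linarith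
    have hz0 : z n = 0 := abs_nonpos_iff.mp this
    simp [hz0, hC]
  · rw [abs_div, abs_of_pos h, div_le_iff₀ h]
    have := hz.abs_le n
    nlinarith

section MF

variable {W : Type*} [TopologicalSpace W] {m : (ℕ → ℝ) → C(W, ℝ)}

/-- Claim P: a pointwise-nonnegative element of `X^ℝ` has nonnegative measure. -/
lemma claimP (hmono : Monotone In) (hm : IsSeqMF In m) {z : ℕ → ℝ} {C : ℝ}
    (hC : 0 < C) (hz : BddXR In C z) (hpos : ∀ n, 0 ≤ z n) :
    ∀ w, 0 ≤ m z w := by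
  intro w
  set u : ℕ → ℝ := fun n => z n + C * ic In n with hud
  have habs := hz.abs_le
  have hicd : ∀ n, 0 ≤ ic In (n+1) - ic In n :=
    fun n => sub_nonneg.mpr (ic_mono hmono (Nat.le_succ n))
  have huX : u ∈ Xplus In := by
    refine mem_Xplus_of (show (0:ℝ) < 2 * C by linarith) ?_ ?_ ?_
    · have := abs_le.mp (habs 0); simp only [hud]; linarith [this.1]
    · have := abs_le.mp (habs 0); simp only [hud]; linarith [this.2]
    · intro n
      have h2 := abs_le.mp (hz.2 n)
      constructor
      · simp only [hud]; nlinarith [h2.1]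
      · simp only [hud]; nlinarith [h2.2]
  have hyX : (fun n => C * ic In n) ∈ Xplus In := smul_ic_mem_Xplus hmono hC.le
  have hleq : SeqLeq In (fun n => C * ic In n) u := by
    show 0 ≤ atTop.liminf fun n => (u n - C * ic In n) / ((In n).card : ℝ)
    have hfun : (fun n => (u n - C * ic In n) / ((In n).card : ℝ))
        = fun n => z n / ic In n := by
      funext n; congr 1; simp only [hud]; ring
    rw [hfun]
    have hb : IsBoundedUnder (fun x1 x2 => x1 ≤ x2) atTop (fun n => z n / ic In n) :=
      isBoundedUnder_of ⟨C, fun n => (abs_le.mp (ratio_abs_le hz hC.le n)).2⟩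
    exact le_liminf_of_le hb.isCoboundedUnder_ge
      (Eventually.of_forall fun n => div_nonneg (hpos n) (ic_nonneg n))
  have hptw := (hm.2.1 _ hyX _ huX).mpr hleq w
  -- identify both sides
  have hicXR : (fun n => ((In n).card : ℝ)) ∈ XR In :=
    mem_XR_of_bdd hmono one_pos (bdd_ic hmono)
  have hCif : (fun n => C * ic In n) = C • (fun n => ((In n).card : ℝ)) := by
    funext n; simp [smul_eq_mul, ic]
  have hmy : m (fun n => C * ic In n) = C • (1 : C(W, ℝ)) := by
    rw [hCif, hm.2.2.2.2 _ hicXR, hm.2.2.1]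
  have hzXR : z ∈ XR In := mem_XR_of_bdd hmono hC hz
  have huadd : u = z + (fun n => C * ic In n) := by funext n; simp [hud]
  have hmu : m u = m z + C • (1 : C(W, ℝ)) := by
    rw [huadd, hm.2.2.2.1 _ hzXR _ (mem_XR_of_bdd' hmono (by positivity)
      ((bdd_ic hmono).smulf (c := C).mono hmono (by rw [abs_of_pos hC]; linarith))), hmy]
  rw [hmy, hmu] at hptw
  simpa using hptw

/-- Claim Q: if `m z ≥ δ` everywhere then `liminf (z - δ·i)/i ≥ 0`. -/
lemma claimQ (hmono : Monotone In) (hm : IsSeqMF In m) {z : ℕ → ℝ} {C δ : ℝ}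
    (hC : 0 < C) (hδ : 0 ≤ δ) (hz : BddXR In C z) (h : ∀ w, δ ≤ m z w) :
    0 ≤ atTop.liminf fun n => (z n - δ * ic In n) / ((In n).card : ℝ) := by
  set u : ℕ → ℝ := fun n => z n + C * ic In n with hud
  have habs := hz.abs_le
  have hicd : ∀ n, 0 ≤ ic In (n+1) - ic In n :=
    fun n => sub_nonneg.mpr (ic_mono hmono (Nat.le_succ n))
  have huX : u ∈ Xplus In := by
    refine mem_Xplus_of (show (0:ℝ) < 2 * C by linarith) ?_ ?_ ?_
    · have := abs_le.mp (habs 0); simp only [hud]; linarith [this.1]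
    · have := abs_le.mp (habs 0); simp only [hud]; linarith [this.2]
    · intro n
      have h2 := abs_le.mp (hz.2 n)
      constructor
      · simp only [hud]; nlinarith [h2.1]
      · simp only [hud]; nlinarith [h2.2]
  have hyX : (fun n => (δ + C) * ic In n) ∈ Xplus In := smul_ic_mem_Xplus hmono (by linarith)
  -- compute the two measures
  have hicXR : (fun n => ((In n).card : ℝ)) ∈ XR In :=
    mem_XR_of_bdd hmono one_pos (bdd_ic hmono)
  have hsmul : ∀ c : ℝ, 0 ≤ c → m (fun n => c * ic In n) = c • (1 : C(W, ℝ)) := by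
    intro c _
    have : (fun n => c * ic In n) = c • (fun n => ((In n).card : ℝ)) := by
      funext n; simp [smul_eq_mul, ic]
    rw [this, hm.2.2.2.2 _ hicXR, hm.2.2.1]
  have hzXR : z ∈ XR In := mem_XR_of_bdd hmono hC hz
  have huadd : u = z + (fun n => C * ic In n) := by funext n; simp [hud]
  have hmu : m u = m z + C • (1 : C(W, ℝ)) := by
    rw [huadd, hm.2.2.2.1 _ hzXR _ (mem_XR_of_bdd' hmono (by positivity)
      ((bdd_ic hmono).smulf (c := C).mono hmono (by rw [abs_of_pos hC]; linarith))),
      hsmul C hC.le]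
  have hptw : ∀ w, m (fun n => (δ + C) * ic In n) w ≤ m u w := by
    intro w
    rw [hsmul (δ + C) (by linarith), hmu]
    have := h w
    simp only [ContinuousMap.add_apply, ContinuousMap.smul_apply, ContinuousMap.one_apply,
      smul_eq_mul, mul_one]
    linarith
  have hleq := (hm.2.1 _ hyX _ huX).mp hptw
  have hfun : (fun n => (u n - (δ + C) * ic In n) / ((In n).card : ℝ))
      = fun n => (z n - δ * ic In n) / ((In n).card : ℝ) := by
    funext n; congr 1; simp only [hud]; ring
  have : SeqLeq In (fun n => (δ + C) * ic In n) u := hleq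
  rw [SeqLeq] at this
  calc (0:ℝ) ≤ atTop.liminf fun n => (u n - (δ + C) * ic In n) / ((In n).card : ℝ) := this
  _ = _ := by rw [hfun]

end MF

/-- convergence along the ultrafilter to the `ulim` -/
lemma tendsto_ratio_ulim (p : Ultrafilter ℕ) {C : ℝ} {z : ℕ → ℝ}
    (hz : BddXR In C z) (hC : 0 ≤ C) :
    Tendsto (fun n => z n / ((In n).card : ℝ)) (p : Filter ℕ)
      (𝓝 (ulim p (fun n => z n / ((In n).card : ℝ)))) := by
  have hmem : ∀ n, z n / ((In n).card : ℝ) ∈ Set.Icc (-C) C := by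
    intro n
    exact abs_le.mp (ratio_abs_le hz hC n)
  have hle : (Ultrafilter.map (fun n => z n / ((In n).card : ℝ)) p : Filter ℝ)
      ≤ 𝓟 (Set.Icc (-C) C) := by
    rw [Ultrafilter.coe_map, Filter.le_principal_iff, Filter.mem_map]
    exact Filter.univ_mem' hmem
  obtain ⟨a, -, ha⟩ := (isCompact_Icc (a := -C) (b := C)).ultrafilter_le_nhds _ hle
  rw [Ultrafilter.coe_map] at ha
  have ht : Tendsto (fun n => z n / ((In n).card : ℝ)) (p : Filter ℕ) (𝓝 a) := ha
  have : ulim p (fun n => z n / ((In n).card : ℝ)) = a := ht.limUnder_eq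
  rw [this]
  exact ht

lemma ic_eventually_pos [Infinite ι] (hmono : Monotone In)
    (hcover : ∀ i : ι, ∃ n, i ∈ In n) : ∀ᶠ n in atTop, 1 ≤ ic In n := by
  obtain ⟨i0⟩ : Nonempty ι := inferInstance
  obtain ⟨n0, hn0⟩ := hcover i0
  rw [eventually_atTop]
  refine ⟨n0, fun n hn => ?_⟩
  have : i0 ∈ In n := hmono hn hn0
  have : 1 ≤ (In n).card := Finset.card_pos.mpr ⟨i0, this⟩
  show (1:ℝ) ≤ ((In n).card : ℝ)
  exact_mod_cast this

end Stmt11Aux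
open Stmt11Aux in
/-- every sequence measure function contains a copy of the ultrafilter
sequence measure function: for each free ultrafilter `p` there is `w_p ∈ W` with
`m x (w_p) = p-lim xₙ/|Iₙ|` for all `x ∈ X^ℝ`. -/
theorem stmt11 {ι : Type*} [Countable ι] [Infinite ι]
    (In : ℕ → Finset ι) (hmono : Monotone In) (hcover : ∀ i : ι, ∃ n, i ∈ In n)
    {W : Type*} [TopologicalSpace W] [CompactSpace W] [T2Space W]
    (m : (ℕ → ℝ) → C(W, ℝ)) (hm : IsSeqMF In m)
    (p : Ultrafilter ℕ) (hp : p.IsFree) :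
    ∃ wp : W, ∀ x ∈ XR In,
      m x wp = ulim p (fun n => x n / ((In n).card : ℝ)) := by
  classical
  have hicd : ∀ n, 0 ≤ ic In (n+1) - ic In n :=
    fun n => sub_nonneg.mpr (ic_mono hmono (Nat.le_succ n))
  have hicXR : (fun n => ((In n).card : ℝ)) ∈ XR In :=
    mem_XR_of_bdd hmono one_pos (bdd_ic hmono)
  have hicev : ∀ᶠ n in atTop, 1 ≤ ic In n := ic_eventually_pos hmono hcover
  have hicevp : ∀ᶠ n in (p : Filter ℕ), 1 ≤ ic In n := by
    refine Eventually.filter_mono hp ?_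
    rwa [Nat.cofinite_eq_atTop]
  -- W is nonempty
  haveI hWne : Nonempty W := by
    by_contra hW
    rw [not_nonempty_iff] at hW
    have h0XR : (0 : ℕ → ℝ) ∈ XR In := by
      refine mem_XR_of_bdd hmono one_pos ⟨?_, fun n => ?_⟩
      · simp only [Pi.zero_apply, abs_zero, one_mul]
        exact ic_nonneg 0
      · simpa using hicd n
    have heq : m (fun n => ((In n).card : ℝ)) = m 0 :=
      ContinuousMap.ext fun w => (hW.false w).elim
    have happ := (hm.1 _ hicXR _ h0XR).mp heq
    rw [SeqApprox] at happ
    have h1 : Tendsto (fun _ : ℕ => (1:ℝ)) atTop (𝓝 0) := by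
      refine happ.congr' ?_
      filter_upwards [hicev] with n hn
      have hpos : (0:ℝ) < ((In n).card : ℝ) := by simp only [ic] at hn; linarith
      simp only [Pi.zero_apply, sub_zero]
      rw [div_self hpos.ne']
    exact zero_ne_one (α := ℝ) (tendsto_nhds_unique h1 tendsto_const_nhds)
  by_contra hmain
  push_neg at hmain
  -- for every point there is a good separating element
  have key : ∀ w : W, ∃ z : ℕ → ℝ, (∃ C, 0 < C ∧ BddXR In C z) ∧
      Tendsto (fun n => z n / ((In n).card : ℝ)) (p : Filter ℕ) (𝓝 0) ∧ 0 < m z w := by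
    intro w
    obtain ⟨x, hxXR, hne⟩ := hmain w
    obtain ⟨C, hCpos, hxB⟩ := bdd_of_mem_XR hxXR
    set c := ulim p (fun n => x n / ((In n).card : ℝ)) with hc
    have hcx := tendsto_ratio_ulim p hxB hCpos.le
    set z0 : ℕ → ℝ := fun n => x n - c * ((In n).card : ℝ) with hz0
    have hz0B : BddXR In (C + |c| * 1) z0 := hxB.subf ((bdd_ic hmono).smulf (c := c))
    have hz0Bpos : 0 < C + |c| * 1 := by positivity
    have hz0t : Tendsto (fun n => z0 n / ((In n).card : ℝ)) (p : Filter ℕ) (𝓝 0) := by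
      have h2 : Tendsto (fun n => x n / ((In n).card : ℝ) - c) (p : Filter ℕ)
          (𝓝 (c - c)) := hcx.sub_const c
      rw [sub_self] at h2
      refine Tendsto.congr' ?_ h2
      filter_upwards [hicevp] with n hn
      have hpos : (0:ℝ) < ((In n).card : ℝ) := by simp only [ic] at hn; linarith
      simp only [hz0]
      field_simp
    have hncXR : (-c) • (fun n => ((In n).card : ℝ)) ∈ XR In := by
      have hb : BddXR In (|(-c)| * 1) (fun n => (-c) * ic In n) :=
        (bdd_ic hmono).smulf (c := -c)
      have : ((-c) • fun n => ((In n).card : ℝ)) = fun n => (-c) * ic In n := by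
        funext n; simp [smul_eq_mul, ic]
      rw [this]
      exact mem_XR_of_bdd' hmono (by positivity) hb
    have hmz0 : ∀ v, m z0 v = m x v - c := by
      intro v
      have hdecomp : z0 = x + (-c) • (fun n => ((In n).card : ℝ)) := by
        funext n
        simp only [hz0, Pi.add_apply, Pi.smul_apply, smul_eq_mul]
        ring
      rw [hdecomp, hm.2.2.2.1 _ hxXR _ hncXR, hm.2.2.2.2 _ hicXR, hm.2.2.1]
      simp only [ContinuousMap.add_apply, ContinuousMap.smul_apply, ContinuousMap.one_apply,
        smul_eq_mul, mul_one]
      ring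
    have hne0 : m z0 w ≠ 0 := by rw [hmz0]; exact sub_ne_zero.mpr hne
    rcases hne0.lt_or_gt with hlt | hgt
    · -- use -z0
      refine ⟨fun n => -(z0 n), ⟨|(-1:ℝ)| * (C + |c| * 1), by positivity, ?_⟩, ?_, ?_⟩
      · have := hz0B.smulf (c := (-1:ℝ))
        simpa using this
      · have h3 : Tendsto (fun n => -(z0 n / ((In n).card : ℝ))) (p : Filter ℕ)
            (𝓝 (-0)) := hz0t.neg
        rw [neg_zero] at h3
        refine h3.congr fun n => ?_
        rw [neg_div]
      · have hz0XR : z0 ∈ XR In := mem_XR_of_bdd hmono hz0Bpos hz0B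
        have hnegeq : (fun n => -(z0 n)) = (-1 : ℝ) • z0 := by
          funext n; simp
        rw [hnegeq, hm.2.2.2.2 _ hz0XR]
        simp only [ContinuousMap.smul_apply, smul_eq_mul, neg_one_mul]
        linarith
    · exact ⟨z0, ⟨C + |c| * 1, hz0Bpos, hz0B⟩, hz0t, hgt⟩
  choose g hgB hgt hgpos using key
  choose Cf hCfpos hCfB using hgB
  -- finite subcover
  have hopen : ∀ w : W, IsOpen {v | 0 < m (g w) v} := fun w =>
    isOpen_lt continuous_const (m (g w)).continuous
  have hcov : (Set.univ : Set W) ⊆ ⋃ w, {v | 0 < m (g w) v} := fun v _ =>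
    Set.mem_iUnion.mpr ⟨v, hgpos v⟩
  obtain ⟨T, hT⟩ := isCompact_univ.elim_finite_subcover _ hopen hcov
  obtain ⟨v1⟩ := hWne
  have hTne : T.Nonempty := by
    have hv1 := hT (Set.mem_univ v1)
    rw [Set.mem_iUnion₂] at hv1
    obtain ⟨w, hw, -⟩ := hv1
    exact ⟨w, hw⟩
  -- the pointwise supremum
  set z : ℕ → ℝ := fun n => T.sup' hTne (fun w => g w n) with hzdef
  set C : ℝ := T.sup' hTne Cf with hCdef
  obtain ⟨w1, hw1⟩ := hTne
  have hCpos : 0 < C := lt_of_lt_of_le (hCfpos w1) (Finset.le_sup' Cf hw1)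
  have hCB : ∀ w ∈ T, BddXR In C (g w) := fun w hw =>
    (hCfB w).mono hmono (Finset.le_sup' Cf hw)
  have hzB : BddXR In C z := by
    constructor
    · rw [abs_le]
      constructor
      · calc -(C * ic In 0) ≤ g w1 0 := (abs_le.mp (hCB w1 hw1).1).1
        _ ≤ z 0 := Finset.le_sup' (fun w => g w 0) hw1
      · exact Finset.sup'_le _ _ fun w hw => (abs_le.mp (hCB w hw).1).2
    · intro n
      rw [abs_le]
      constructor
      · have h5 : ∀ w ∈ T, g w n ≤ z (n+1) + C * (ic In (n+1) - ic In n) := by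
          intro w hw
          have h2 := (abs_le.mp ((hCB w hw).2 n)).1
          have h3 : g w (n+1) ≤ z (n+1) := Finset.le_sup' (fun w => g w (n+1)) hw
          linarith
        have h4 : z n ≤ z (n+1) + C * (ic In (n+1) - ic In n) := Finset.sup'_le _ _ h5
        linarith
      · have h5 : ∀ w ∈ T, g w (n+1) ≤ z n + C * (ic In (n+1) - ic In n) := by
          intro w hw
          have h2 := (abs_le.mp ((hCB w hw).2 n)).2
          have h3 : g w n ≤ z n := Finset.le_sup' (fun w => g w n) hw
          linarith
        have h4 : z (n+1) ≤ z n + C * (ic In (n+1) - ic In n) := Finset.sup'_le _ _ h5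
        linarith
  have hzXR : z ∈ XR In := mem_XR_of_bdd hmono hCpos hzB
  -- m z dominates each m (g w)
  have hdom : ∀ w ∈ T, ∀ v, m (g w) v ≤ m z v := by
    intro w hw v
    have hgwXR : g w ∈ XR In := mem_XR_of_bdd hmono (hCfpos w) (hCfB w)
    have hdB : BddXR In (C + C) (fun n => z n - g w n) := hzB.subf (hCB w hw)
    have hnn : ∀ n, 0 ≤ z n - g w n := fun n =>
      sub_nonneg.mpr (Finset.le_sup' (fun w => g w n) hw)
    have h0 := claimP hmono hm (by linarith : (0:ℝ) < C + C) hdB hnn v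
    have hdecomp : g w + (fun n => z n - g w n) = z := by
      funext n; simp only [Pi.add_apply]; ring
    have hadd := hm.2.2.2.1 _ hgwXR _ (mem_XR_of_bdd hmono (by linarith : (0:ℝ) < C + C) hdB)
    rw [hdecomp] at hadd
    have h6 : m z v = m (g w) v + m (fun n => z n - g w n) v := by
      rw [hadd]; simp
    linarith
  -- minimum of m z
  obtain ⟨v0, -, hv0⟩ := isCompact_univ.exists_isMinOn ⟨v1, Set.mem_univ v1⟩
    (m z).continuous.continuousOn
  set δ : ℝ := m z v0 with hδdef
  have hδle : ∀ v, δ ≤ m z v := fun v => isMinOn_iff.mp hv0 v (Set.mem_univ v)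
  have hδpos : 0 < δ := by
    have hv0' := hT (Set.mem_univ v0)
    rw [Set.mem_iUnion₂] at hv0'
    obtain ⟨w, hw, hwpos⟩ := hv0'
    exact lt_of_lt_of_le hwpos (hdom w hw v0)
  -- liminf lower bound from claim Q
  have hQ := claimQ hmono hm hCpos hδpos.le hzB hδle
  have hbd : IsBoundedUnder (fun x1 x2 => x1 ≥ x2) atTop
      (fun n => (z n - δ * ic In n) / ((In n).card : ℝ)) := by
    refine isBoundedUnder_of ⟨-(C + δ), fun n => ?_⟩
    rcases eq_or_lt_of_le (ic_nonneg (In := In) n) with h | h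
    · have h1 := hzB.abs_le n
      have hz0 : z n = 0 := by
        have h7 : |z n| ≤ 0 := by rw [← h, mul_zero] at h1; exact h1
        exact abs_nonpos_iff.mp h7
      have hic0 : ((In n).card : ℝ) = 0 := h.symm
      have hic0' : ic In n = 0 := h.symm
      rw [hz0, hic0, hic0']
      norm_num
      linarith
    · have hpos : (0:ℝ) < ((In n).card : ℝ) := h
      rw [ge_iff_le, le_div_iff₀ hpos]
      have h1 := abs_le.mp (hzB.abs_le n)
      have h1' : -(C * ((In n).card : ℝ)) ≤ z n := by
        have := h1.1; simp only [ic] at this; linarith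
      have hicc : ic In n = ((In n).card : ℝ) := rfl
      rw [hicc]
      nlinarith
  have hev1 : ∀ᶠ n in atTop, -(δ/2) < (z n - δ * ic In n) / ((In n).card : ℝ) :=
    eventually_lt_of_lt_liminf (lt_of_lt_of_le (by linarith) hQ) hbd
  have hev2 : ∀ᶠ n in atTop, δ/2 * ((In n).card : ℝ) < z n := by
    filter_upwards [hev1, hicev] with n h1 h2
    have hpos : (0:ℝ) < ((In n).card : ℝ) := by simp only [ic] at h2; linarith
    rw [lt_div_iff₀ hpos] at h1
    have hicc : ic In n = ((In n).card : ℝ) := rfl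
    rw [hicc] at h1
    nlinarith
  have hev2p : ∀ᶠ n in (p : Filter ℕ), δ/2 * ((In n).card : ℝ) < z n := by
    refine Eventually.filter_mono hp ?_
    rwa [Nat.cofinite_eq_atTop]
  have hallp : ∀ᶠ n in (p : Filter ℕ), ∀ w ∈ T, g w n / ((In n).card : ℝ) < δ/2 := by
    rw [eventually_all_finset]
    intro w _
    exact (hgt w).eventually_lt_const (by linarith)
  have hfinal : ∀ᶠ n in (p : Filter ℕ), False := by
    filter_upwards [hev2p, hallp, hicevp] with n h1 h2 h3
    have hpos : (0:ℝ) < ((In n).card : ℝ) := by simp only [ic] at h3; linarith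
    have hlt : z n < δ/2 * ((In n).card : ℝ) := by
      have h8 : ∀ w ∈ T, g w n < δ/2 * ((In n).card : ℝ) := by
        intro w hw
        have h9 := h2 w hw
        rw [div_lt_iff₀ hpos] at h9
        nlinarith
      exact (Finset.sup'_lt_iff ⟨w1, hw1⟩).mpr h8
    linarith
  obtain ⟨n, hn⟩ := hfinal.exists
  exact hn

end
end

section
/- Let m : X^ℝ → C(W,ℝ) be a minimal sequence measure function. Then the range of m is uniformly dense in C(W,ℝ): for every real-valued continuous function f on W and every ε > 0 there exists x ∈ X^ℝ such that sup_{w∈W} |m(x)(w) − f(w)| < ε. -/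
/-!
A sequence measure function is a positive linear map on `X^ℝ`, the vector lattice of sequences
whose increments are dominated by those of `i`, and `m z ≤ c` on all of `W` iff
`limsup zₙ / |Iₙ| ≤ c`. Call `w` a lattice point if `m |u| w = |m u w|` for every `u`.
Every `z` has a lattice point `w` with `limsup zₙ / |Iₙ| ≤ m z w`: for finitely many `u`, take an
ultrafilter along which `zₙ / |Iₙ|` tends to its `limsup` and recentre each `u` at the limit `c_u`
of `u / i`; at a maximum point of `m (z - ∑ |u - c_u • i|)` every `m |u - c_u • i|` vanishes,
and compactness of `W` handles all `u` at once. So the restriction of `m` to the closed set of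
lattice points is again a sequence measure function, and irreducibility makes every point a
lattice point. The range of `m` is then a point-separating subspace of `C(W, ℝ)` that contains
`1` and is closed under `|·|`, hence dense by the lattice Stone–Weierstrass theorem.
-/

open Filter Topology

noncomputable section

section

variable {ι : Type*} {In : ℕ → Finset ι}

/-- The paper's `i = (|Iₙ|)ₙ`. -/
def cardSeq (In : ℕ → Finset ι) (n : ℕ) : ℝ := (In n).card

lemma cardSeq_nonneg (n : ℕ) : 0 ≤ cardSeq In n := Nat.cast_nonneg _

/-- Increments, with the convention `z (-1) = 0`. -/
def increment (z : ℕ → ℝ) : ℕ → ℝ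
  | 0 => z 0
  | n + 1 => z (n + 1) - z n

lemma sum_range_succ_increment (z : ℕ → ℝ) (n : ℕ) :
    ∑ k ∈ Finset.range (n + 1), increment z k = z n := by
  induction n with
  | zero => simp [increment]
  | succ n ih => rw [Finset.sum_range_succ, ih, increment]; ring

lemma increment_add (z u : ℕ → ℝ) : increment (z + u) = increment z + increment u := by
  funext n; cases n <;> simp [increment]; ring

lemma increment_smul (c : ℝ) (z : ℕ → ℝ) : increment (c • z) = c • increment z := by
  funext n; cases n <;> simp [increment]; ring

lemma increment_sub (z u : ℕ → ℝ) : increment (z - u) = increment z - increment u := by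
  funext n; cases n <;> simp [increment]; ring

lemma abs_increment_abs_le (z : ℕ → ℝ) (n : ℕ) : |increment |z| n| ≤ |increment z n| := by
  cases n with
  | zero => simp [increment]
  | succ n => exact abs_abs_sub_abs_le_abs_sub _ _

lemma increment_partialSum (f : ℕ → ℝ) :
    increment (fun n => ∑ k ∈ Finset.range (n + 1), f k) = f := by
  funext n; cases n <;> simp [increment, Finset.sum_range_succ]

lemma increment_cardSeq_nonneg (hmono : Monotone In) (n : ℕ) :
    0 ≤ increment (cardSeq In) n := by
  cases n with
  | zero => exact Nat.cast_nonneg _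
  | succ n =>
    exact sub_nonneg.2 (Nat.cast_le.2 (Finset.card_le_card (hmono n.le_succ)))

lemma frameCompatible_iff {x : ℕ → ℝ} :
    FrameCompatible In x ↔ ∀ n, 0 ≤ increment x n ∧ increment x n ≤ increment (cardSeq In) n := by
  refine ⟨fun ⟨h0, hsucc⟩ n => ?_, fun h => ⟨h 0, fun n => h (n + 1)⟩⟩
  cases n with
  | zero => exact h0
  | succ n => exact hsucc n

lemma cardSeq_mem_Xset (hmono : Monotone In) : cardSeq In ∈ Xset In :=
  frameCompatible_iff.2 fun n => ⟨increment_cardSeq_nonneg hmono n, le_rfl⟩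

lemma mem_Xplus_of_increment {p : ℕ → ℝ} {C : ℝ} (hC : 0 < C)
    (hp : ∀ n, 0 ≤ increment p n ∧ increment p n ≤ C * increment (cardSeq In) n) :
    p ∈ Xplus In := by
  refine ⟨C, hC.le, C⁻¹ • p, frameCompatible_iff.2 fun n => ?_, by simp [smul_smul, hC.ne']⟩
  rw [increment_smul, Pi.smul_apply, smul_eq_mul, inv_mul_le_iff₀ hC]
  exact ⟨mul_nonneg (inv_nonneg.2 hC.le) (hp n).1, (hp n).2⟩

/-- A sequence with dominated increments is the difference of the partial sums of the positive
and of the negative parts of its increments. -/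
theorem mem_XR_iff (hmono : Monotone In) {z : ℕ → ℝ} :
    z ∈ XR In ↔ ∃ C, 0 < C ∧ ∀ n, |increment z n| ≤ C * increment (cardSeq In) n := by
  constructor
  · rintro ⟨_, ⟨c₁, hc₁, x₁, hx₁, rfl⟩, _, ⟨c₂, hc₂, x₂, hx₂, rfl⟩, rfl⟩
    refine ⟨c₁ + c₂ + 1, by positivity, fun n => ?_⟩
    obtain ⟨h₁, h₁'⟩ := frameCompatible_iff.1 hx₁ n
    obtain ⟨h₂, h₂'⟩ := frameCompatible_iff.1 hx₂ n
    have hi := increment_cardSeq_nonneg hmono n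
    simp only [increment_sub, increment_smul, Pi.sub_apply, Pi.smul_apply, smul_eq_mul]
    rw [abs_le]
    constructor <;> nlinarith
  · rintro ⟨C, hC, hz⟩
    have hpos : ∀ n, 0 ≤ (increment z n)⁺ ∧ (increment z n)⁺ ≤ C * increment (cardSeq In) n :=
      fun n => ⟨posPart_nonneg _, by
        linarith [posPart_add_negPart (increment z n), negPart_nonneg (increment z n), hz n]⟩
    have hneg : ∀ n, 0 ≤ (increment z n)⁻ ∧ (increment z n)⁻ ≤ C * increment (cardSeq In) n :=
      fun n => ⟨negPart_nonneg _, by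
        linarith [posPart_add_negPart (increment z n), posPart_nonneg (increment z n), hz n]⟩
    refine ⟨_, mem_Xplus_of_increment hC (p := fun n => ∑ k ∈ Finset.range (n + 1),
        (increment z k)⁺) (by simpa only [increment_partialSum] using hpos),
      _, mem_Xplus_of_increment hC (p := fun n => ∑ k ∈ Finset.range (n + 1),
        (increment z k)⁻) (by simpa only [increment_partialSum] using hneg), ?_⟩
    funext n
    simp only [Pi.sub_apply, ← Finset.sum_sub_distrib, posPart_sub_negPart,
      sum_range_succ_increment]

lemma abs_le_mul_cardSeq {z : ℕ → ℝ} {C : ℝ}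
    (hz : ∀ n, |increment z n| ≤ C * increment (cardSeq In) n) (n : ℕ) :
    |z n| ≤ C * cardSeq In n := by
  rw [← sum_range_succ_increment z, ← sum_range_succ_increment (cardSeq In), Finset.mul_sum]
  exact (Finset.abs_sum_le_sum_abs _ _).trans (Finset.sum_le_sum fun k _ => hz k)

def xrSubmodule (hmono : Monotone In) : Submodule ℝ (ℕ → ℝ) where
  carrier := XR In
  zero_mem' := Xplus_subset_XR hmono (zero_mem_Xplus hmono)
  add_mem' := by
    rintro z u hz hu
    obtain ⟨C, hC, hz⟩ := (mem_XR_iff hmono).1 hz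
    obtain ⟨D, hD, hu⟩ := (mem_XR_iff hmono).1 hu
    refine (mem_XR_iff hmono).2 ⟨C + D, by positivity, fun n => ?_⟩
    rw [increment_add, Pi.add_apply, add_mul]
    exact (abs_add_le _ _).trans (add_le_add (hz n) (hu n))
  smul_mem' := by
    rintro c z hz
    obtain ⟨C, hC, hz⟩ := (mem_XR_iff hmono).1 hz
    refine (mem_XR_iff hmono).2 ⟨(|c| + 1) * C, by positivity, fun n => ?_⟩
    rw [increment_smul, Pi.smul_apply, smul_eq_mul, abs_mul, mul_assoc]
    exact mul_le_mul (le_add_of_nonneg_right zero_le_one) (hz n) (abs_nonneg _) (by positivity)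

lemma smul_cardSeq_mem_XR (hmono : Monotone In) (c : ℝ) : c • cardSeq In ∈ XR In :=
  (xrSubmodule hmono).smul_mem c <|
    Xplus_subset_XR hmono ⟨1, zero_le_one, cardSeq In, cardSeq_mem_Xset hmono, (one_smul ℝ _).symm⟩

lemma cardSeq_mem_XR (hmono : Monotone In) : cardSeq In ∈ XR In := by
  simpa using smul_cardSeq_mem_XR hmono 1

lemma abs_mem_XR (hmono : Monotone In) {z : ℕ → ℝ} (hz : z ∈ XR In) : |z| ∈ XR In := by
  obtain ⟨C, hC, hz⟩ := (mem_XR_iff hmono).1 hz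
  exact (mem_XR_iff hmono).2 ⟨C, hC, fun n => (abs_increment_abs_le z n).trans (hz n)⟩

def ratio (In : ℕ → Finset ι) (z : ℕ → ℝ) (n : ℕ) : ℝ := z n / cardSeq In n

lemma abs_ratio_le (hmono : Monotone In) {z : ℕ → ℝ} (hz : z ∈ XR In) :
    ∃ C, ∀ n, |ratio In z n| ≤ C := by
  obtain ⟨C, hC, hz⟩ := (mem_XR_iff hmono).1 hz
  refine ⟨C, fun n => ?_⟩
  rw [ratio, abs_div, abs_of_nonneg (cardSeq_nonneg n)]
  exact div_le_of_le_mul₀ (cardSeq_nonneg n) hC.le (abs_le_mul_cardSeq hz n)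

lemma isBoundedUnder_abs_ratio (hmono : Monotone In) {z : ℕ → ℝ} (hz : z ∈ XR In) :
    IsBoundedUnder (· ≤ ·) atTop fun n => |ratio In z n| :=
  let ⟨C, hC⟩ := abs_ratio_le hmono hz
  isBoundedUnder_of ⟨C, hC⟩

lemma isBoundedUnder_le_ratio (hmono : Monotone In) {z : ℕ → ℝ} (hz : z ∈ XR In) :
    IsBoundedUnder (· ≤ ·) atTop (ratio In z) :=
  (isBoundedUnder_le_abs.1 (isBoundedUnder_abs_ratio hmono hz)).1

lemma isBoundedUnder_ge_ratio (hmono : Monotone In) {z : ℕ → ℝ} (hz : z ∈ XR In) :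
    IsBoundedUnder (· ≥ ·) atTop (ratio In z) :=
  (isBoundedUnder_le_abs.1 (isBoundedUnder_abs_ratio hmono hz)).2

lemma ratio_smul_cardSeq_sub {n : ℕ} (hn : 0 < cardSeq In n) (c : ℝ) (z : ℕ → ℝ) :
    ratio In (c • cardSeq In - z) n = c - ratio In z n := by
  simp only [ratio, Pi.sub_apply, Pi.smul_apply, smul_eq_mul, sub_div,
    mul_div_cancel_right₀ _ hn.ne']

lemma exists_tendsto_ratio (hmono : Monotone In) (U : Ultrafilter ℕ) {z : ℕ → ℝ}
    (hz : z ∈ XR In) : ∃ c, Tendsto (ratio In z) U (𝓝 c) := by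
  obtain ⟨C, hC⟩ := abs_ratio_le hmono hz
  obtain ⟨c, -, hc⟩ := isCompact_Icc.ultrafilter_le_nhds' (U.map (ratio In z))
    (Ultrafilter.mem_map.2 (univ_mem' fun n => abs_le.1 (hC n)))
  exact ⟨c, hc⟩

lemma ratio_sub_sum_abs_sub {α : Type*} {n : ℕ} (hn : 0 < cardSeq In n) (z : ℕ → ℝ)
    (u : α → ℕ → ℝ) (c : α → ℝ) (G : Finset α) :
    ratio In (z - ∑ a ∈ G, |u a - c a • cardSeq In|) n =
      ratio In z n - ∑ a ∈ G, |ratio In (u a) n - c a| := by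
  simp only [ratio, Pi.sub_apply, Finset.sum_apply, Pi.abs_apply, Pi.smul_apply, smul_eq_mul,
    sub_div, Finset.sum_div]
  congr 1
  refine Finset.sum_congr rfl fun a _ => ?_
  rw [div_sub' hn.ne', abs_div, abs_of_pos hn, mul_comm]

lemma sub_sum_abs_mem_XR (hmono : Monotone In) {z : ℕ → ℝ} (hz : z ∈ XR In) {α : Type*}
    {u : α → ℕ → ℝ} (hu : ∀ a, u a ∈ XR In) (c : α → ℝ) (G : Finset α) :
    z - ∑ a ∈ G, |u a - c a • cardSeq In| ∈ XR In :=
  (xrSubmodule hmono).sub_mem hz <| (xrSubmodule hmono).sum_mem fun a _ => abs_mem_XR hmono <|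
    (xrSubmodule hmono).sub_mem (hu a) (smul_cardSeq_mem_XR hmono _)

/-- Take `c a` to be the limit of `u a / i` along an ultrafilter on which `z / i` tends to its
`limsup`. -/
theorem exists_limsup_ratio_le_sub_sum_abs (hmono : Monotone In)
    (hpos : ∀ᶠ n in atTop, 0 < cardSeq In n) {z : ℕ → ℝ} (hz : z ∈ XR In) {α : Type*}
    {u : α → ℕ → ℝ} (hu : ∀ a, u a ∈ XR In) (G : Finset α) :
    ∃ c : α → ℝ, limsup (ratio In z) atTop ≤
      limsup (ratio In (z - ∑ a ∈ G, |u a - c a • cardSeq In|)) atTop := by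
  obtain ⟨U, hUle, hzU⟩ := mapClusterPt_iff_ultrafilter.1 (MapClusterPt.limsup
    (isBoundedUnder_ge_ratio hmono hz).isCoboundedUnder_le (isBoundedUnder_le_ratio hmono hz))
  choose c hc using fun a => exists_tendsto_ratio hmono U (hu a)
  have hlim := hzU.sub (tendsto_finsetSum G fun a _ => ((hc a).sub_const (c a)).abs)
  simp only [sub_self, abs_zero, Finset.sum_const_zero, sub_zero] at hlim
  refine ⟨c, MapClusterPt.le_limsup (mapClusterPt_iff_ultrafilter.2 ⟨U, hUle, hlim.congr' ?_⟩)
    (isBoundedUnder_le_ratio hmono ?_)⟩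
  · exact (hpos.filter_mono hUle).mono fun n hn => (ratio_sub_sum_abs_sub hn z u c G).symm
  · exact sub_sum_abs_mem_XR hmono hz hu c G

namespace IsSeqMF

variable {W : Type*} [TopologicalSpace W] {m : (ℕ → ℝ) → C(W, ℝ)}

lemma map_add (hm : IsSeqMF In m) {x y : ℕ → ℝ} (hx : x ∈ XR In) (hy : y ∈ XR In) :
    m (x + y) = m x + m y :=
  hm.2.2.2.1 x hx y hy

def toLinearMap (hm : IsSeqMF In m) (hmono : Monotone In) : xrSubmodule hmono →ₗ[ℝ] C(W, ℝ) where
  toFun z := m z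
  map_add' x y := hm.map_add x.2 y.2
  map_smul' c x := hm.2.2.2.2 x x.2 c

lemma map_sub (hm : IsSeqMF In m) (hmono : Monotone In) {x y : ℕ → ℝ} (hx : x ∈ XR In)
    (hy : y ∈ XR In) : m (x - y) = m x - m y :=
  _root_.map_sub (hm.toLinearMap hmono) ⟨x, hx⟩ ⟨y, hy⟩

lemma map_neg (hm : IsSeqMF In m) (hmono : Monotone In) {x : ℕ → ℝ} (hx : x ∈ XR In) :
    m (-x) = -m x :=
  _root_.map_neg (hm.toLinearMap hmono) ⟨x, hx⟩

lemma map_sum (hm : IsSeqMF In m) (hmono : Monotone In) {α : Type*} {u : α → ℕ → ℝ}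
    (hu : ∀ a, u a ∈ XR In) (G : Finset α) : m (∑ a ∈ G, u a) = ∑ a ∈ G, m (u a) := by
  have h := _root_.map_sum (hm.toLinearMap hmono) (fun a => (⟨u a, hu a⟩ : xrSubmodule hmono)) G
  simpa only [toLinearMap, LinearMap.coe_mk, AddHom.coe_mk, Submodule.coe_sum] using h

lemma map_cardSeq (hm : IsSeqMF In m) : m (cardSeq In) = 1 := hm.2.2.1

lemma map_smul_cardSeq (hm : IsSeqMF In m) (hmono : Monotone In) (c : ℝ) :
    m (c • cardSeq In) = c • 1 := by
  rw [hm.2.2.2.2 _ (cardSeq_mem_XR hmono) c, hm.map_cardSeq]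

theorem nonneg_iff (hm : IsSeqMF In m) (hmono : Monotone In) {z : ℕ → ℝ} (hz : z ∈ XR In) :
    (∀ w, 0 ≤ m z w) ↔ 0 ≤ liminf (ratio In z) atTop := by
  obtain ⟨x, hx, y, hy, rfl⟩ := hz
  refine Iff.trans ?_ (hm.2.1 y hy x hx)
  simp only [hm.map_sub hmono (Xplus_subset_XR hmono hx) (Xplus_subset_XR hmono hy),
    ContinuousMap.sub_apply, sub_nonneg]

lemma apply_nonneg (hm : IsSeqMF In m) (hmono : Monotone In) {z : ℕ → ℝ} (hz : z ∈ XR In)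
    (h : 0 ≤ z) (w : W) : 0 ≤ m z w :=
  (hm.nonneg_iff hmono hz).2 (le_liminf_of_le (isBoundedUnder_le_ratio hmono hz).isCoboundedUnder_ge
    (.of_forall fun n => div_nonneg (h n) (cardSeq_nonneg n))) w

lemma apply_mono (hm : IsSeqMF In m) (hmono : Monotone In) {z u : ℕ → ℝ} (hz : z ∈ XR In)
    (hu : u ∈ XR In) (h : z ≤ u) (w : W) : m z w ≤ m u w := by
  have := hm.apply_nonneg hmono ((xrSubmodule hmono).sub_mem hu hz) (sub_nonneg.2 h) w
  rwa [hm.map_sub hmono hu hz, ContinuousMap.sub_apply, sub_nonneg] at this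

lemma abs_apply_le_apply_abs (hm : IsSeqMF In m) (hmono : Monotone In) {z : ℕ → ℝ}
    (hz : z ∈ XR In) (w : W) : |m z w| ≤ m |z| w := by
  have hneg := hm.apply_mono hmono ((xrSubmodule hmono).neg_mem hz) (abs_mem_XR hmono hz)
    (neg_le_abs z) w
  rw [hm.map_neg hmono hz, ContinuousMap.neg_apply] at hneg
  exact abs_le.2 ⟨neg_le.1 hneg, hm.apply_mono hmono hz (abs_mem_XR hmono hz) (le_abs_self z) w⟩

/-- Otherwise monotonicity forces `i = 0`, and then `1 = m i = m 0 = 0`. -/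
lemma eventually_cardSeq_pos [Nonempty W] (hm : IsSeqMF In m) (hmono : Monotone In) :
    ∀ᶠ n in atTop, 0 < cardSeq In n := by
  by_contra h
  have hzero : cardSeq In = 0 := by
    funext k
    obtain ⟨n, hn, hkn⟩ := ((not_eventually.1 h).and_eventually (eventually_ge_atTop k)).exists
    have : cardSeq In k ≤ cardSeq In n := Nat.cast_le.2 (Finset.card_le_card (hmono hkn))
    exact le_antisymm (this.trans (not_lt.1 hn)) (cardSeq_nonneg k)
  have h1 := hm.map_smul_cardSeq hmono 0
  rw [zero_smul, zero_smul, ← hzero, hm.map_cardSeq] at h1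
  exact one_ne_zero (congrArg (· (Classical.arbitrary W)) h1)

theorem le_iff_limsup_le [Nonempty W] (hm : IsSeqMF In m) (hmono : Monotone In) {z : ℕ → ℝ}
    (hz : z ∈ XR In) (c : ℝ) : (∀ w, m z w ≤ c) ↔ limsup (ratio In z) atTop ≤ c := by
  have hcz := (xrSubmodule hmono).sub_mem (smul_cardSeq_mem_XR hmono c) hz
  have key := hm.nonneg_iff hmono hcz
  rw [liminf_congr ((hm.eventually_cardSeq_pos hmono).mono fun n hn =>
      ratio_smul_cardSeq_sub hn c z),
    liminf_const_sub _ _ _ (isBoundedUnder_le_ratio hmono hz)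
      (isBoundedUnder_ge_ratio hmono hz).isCoboundedUnder_le,
    sub_nonneg] at key
  rw [← key]
  simp only [hm.map_sub hmono (smul_cardSeq_mem_XR hmono c) hz,
    hm.map_smul_cardSeq hmono, ContinuousMap.sub_apply, ContinuousMap.smul_apply,
    ContinuousMap.one_apply, smul_eq_mul, mul_one, sub_nonneg]

lemma apply_abs_le_of_apply_abs_sub_eq_zero (hm : IsSeqMF In m) (hmono : Monotone In)
    {u : ℕ → ℝ} (hu : u ∈ XR In) {c : ℝ} {w : W} (hw : m |u - c • cardSeq In| w = 0) :
    m |u| w ≤ |m u w| := by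
  have hci := smul_cardSeq_mem_XR hmono c
  have hd := (xrSubmodule hmono).sub_mem hu hci
  have hc : m u w = c := by
    have := hm.abs_apply_le_apply_abs hmono hd w
    rw [hw, hm.map_sub hmono hu hci, hm.map_smul_cardSeq hmono] at this
    simpa [sub_eq_zero] using this
  have htri : |u| ≤ |u - c • cardSeq In| + |c| • cardSeq In := fun n => by
    have := abs_sub_abs_le_abs_sub (u n) (c * cardSeq In n)
    rw [abs_mul, abs_of_nonneg (cardSeq_nonneg n)] at this
    simp only [Pi.add_apply, Pi.abs_apply, Pi.sub_apply, Pi.smul_apply, smul_eq_mul]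
    linarith
  have hle := hm.apply_mono hmono (abs_mem_XR hmono hu)
    ((xrSubmodule hmono).add_mem (abs_mem_XR hmono hd) (smul_cardSeq_mem_XR hmono |c|)) htri w
  rw [hm.map_add (abs_mem_XR hmono hd) (smul_cardSeq_mem_XR hmono |c|),
    hm.map_smul_cardSeq hmono] at hle
  simpa [hw, hc] using hle

/-- At a maximum point of `m (z - ∑ a ∈ G, |u a - c a • i|)`, with `c` from
`exists_limsup_ratio_le_sub_sum_abs`, every `m |u a - c a • i|` vanishes. -/
theorem exists_limsup_le_and_apply_abs_le [CompactSpace W] [Nonempty W] (hm : IsSeqMF In m)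
    (hmono : Monotone In) {z : ℕ → ℝ} (hz : z ∈ XR In) {α : Type*} {u : α → ℕ → ℝ}
    (hu : ∀ a, u a ∈ XR In) (G : Finset α) :
    ∃ w, limsup (ratio In z) atTop ≤ m z w ∧ ∀ a ∈ G, m |u a| w ≤ |m (u a) w| := by
  obtain ⟨c, hc⟩ := exists_limsup_ratio_le_sub_sum_abs hmono (hm.eventually_cardSeq_pos hmono) hz
    hu G
  set v : α → ℕ → ℝ := fun a => |u a - c a • cardSeq In|
  have hv : ∀ a, v a ∈ XR In := fun a => abs_mem_XR hmono <|
    (xrSubmodule hmono).sub_mem (hu a) (smul_cardSeq_mem_XR hmono _)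
  have hh := sub_sum_abs_mem_XR hmono hz hu c G
  obtain ⟨w, -, hw⟩ := isCompact_univ.exists_isMaxOn Set.univ_nonempty
    (m (z - ∑ a ∈ G, v a)).continuous.continuousOn
  have hmax : limsup (ratio In (z - ∑ a ∈ G, v a)) atTop ≤ m (z - ∑ a ∈ G, v a) w :=
    (hm.le_iff_limsup_le hmono hh _).1 fun w' => hw (Set.mem_univ w')
  have hzw : m z w ≤ limsup (ratio In z) atTop := (hm.le_iff_limsup_le hmono hz _).2 le_rfl w
  have hsplit : m (z - ∑ a ∈ G, v a) w = m z w - ∑ a ∈ G, m (v a) w := by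
    rw [hm.map_sub hmono hz ((xrSubmodule hmono).sum_mem fun a _ => hv a), hm.map_sum hmono hv]
    simp
  have hvnonneg : ∀ a ∈ G, 0 ≤ m (v a) w := fun a _ =>
    hm.apply_nonneg hmono (hv a) (abs_nonneg _) w
  have hvzero : ∀ a ∈ G, m (v a) w = 0 :=
    (Finset.sum_eq_zero_iff_of_nonneg hvnonneg).1
      (le_antisymm (by linarith) (Finset.sum_nonneg hvnonneg))
  exact ⟨w, by linarith [Finset.sum_nonneg hvnonneg], fun a ha =>
    hm.apply_abs_le_of_apply_abs_sub_eq_zero hmono (hu a) (hvzero a ha)⟩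

end IsSeqMF

/-- The points at which `m` commutes with `|·|` (the reverse inequality holds everywhere). -/
def latticeSet {W : Type*} [TopologicalSpace W] (In : ℕ → Finset ι) (m : (ℕ → ℝ) → C(W, ℝ)) :
    Set W :=
  {w | ∀ u ∈ XR In, m |u| w ≤ |m u w|}

lemma isClosed_latticeSet {W : Type*} [TopologicalSpace W] {m : (ℕ → ℝ) → C(W, ℝ)} :
    IsClosed (latticeSet In m) := by
  simp only [latticeSet, Set.ofPred_forall]
  exact isClosed_iInter fun u => isClosed_iInter fun _ =>
    isClosed_le (m |u|).continuous (m u).continuous.abs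

namespace IsSeqMF

variable {W : Type*} [TopologicalSpace W] {m : (ℕ → ℝ) → C(W, ℝ)}

theorem exists_mem_latticeSet_limsup_le [CompactSpace W] [Nonempty W] (hm : IsSeqMF In m)
    (hmono : Monotone In) {z : ℕ → ℝ} (hz : z ∈ XR In) :
    ∃ w ∈ latticeSet In m, limsup (ratio In z) atTop ≤ m z w := by
  have hK : IsCompact {w | limsup (ratio In z) atTop ≤ m z w} :=
    (isClosed_le continuous_const (m z).continuous).isCompact
  obtain ⟨w, hwz, hw⟩ := hK.inter_iInter_nonempty (fun u : XR In => {w | m |u.1| w ≤ |m u.1 w|})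
    (fun u => isClosed_le (m |u.1|).continuous (m u.1).continuous.abs) fun G => by
      obtain ⟨w, hwz, hw⟩ := hm.exists_limsup_le_and_apply_abs_le hmono hz (fun u => u.2) G
      exact ⟨w, hwz, Set.mem_iInter₂.2 hw⟩
  exact ⟨w, fun u hu => Set.mem_iInter.1 hw ⟨u, hu⟩, hwz⟩

lemma nonpos_of_nonpos_on_latticeSet [CompactSpace W] [Nonempty W] (hm : IsSeqMF In m)
    (hmono : Monotone In) {z : ℕ → ℝ} (hz : z ∈ XR In) (h : ∀ w ∈ latticeSet In m, m z w ≤ 0)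
    (w : W) : m z w ≤ 0 :=
  let ⟨w₀, hw₀, hle⟩ := hm.exists_mem_latticeSet_limsup_le hmono hz
  (hm.le_iff_limsup_le hmono hz 0).2 (hle.trans (h w₀ hw₀)) w

theorem restrict {V : Set W} (hm : IsSeqMF In m) (hmono : Monotone In)
    (hV : ∀ z ∈ XR In, (∀ w ∈ V, m z w ≤ 0) → ∀ w, m z w ≤ 0) :
    IsSeqMF In fun x => (m x).restrict V := by
  have hle : ∀ x ∈ XR In, ∀ y ∈ XR In, (∀ w ∈ V, m x w ≤ m y w) → ∀ w, m x w ≤ m y w := by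
    intro x hx y hy h w
    have := hV _ ((xrSubmodule hmono).sub_mem hx hy) (fun w hw => by
      simpa [hm.map_sub hmono hx hy] using h w hw) w
    simpa [hm.map_sub hmono hx hy] using this
  refine ⟨fun x hx y hy => ?_, fun x hx y hy => ?_, ?_, fun x hx y hy => ?_, fun x hx c => ?_⟩
  · rw [← hm.1 x hx y hy]
    refine ⟨fun h => ContinuousMap.ext fun w => le_antisymm ?_ ?_,
      fun h => congrArg (ContinuousMap.restrict V) h⟩
    · exact hle x hx y hy (fun w hw => (ContinuousMap.congr_fun h ⟨w, hw⟩).le) w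
    · exact hle y hy x hx (fun w hw => (ContinuousMap.congr_fun h ⟨w, hw⟩).ge) w
  · rw [← hm.2.1 x hx y hy]
    exact ⟨fun h => hle x (Xplus_subset_XR hmono hx) y (Xplus_subset_XR hmono hy)
      fun w hw => h ⟨w, hw⟩, fun h v => h v⟩
  · ext; simp [hm.2.2.1]
  · ext; simp [hm.map_add hx hy]
  · ext; simp [hm.2.2.2.2 x hx c]

theorem latticeSet_eq_univ [CompactSpace W] (hm : IsSeqMF In m) (hmono : Monotone In)
    (hirr : ¬ SMFReducible In m) : latticeSet In m = Set.univ := by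
  by_contra hne
  obtain ⟨w, -⟩ := Set.nonempty_compl.2 hne
  have : Nonempty W := ⟨w⟩
  exact hirr ⟨_, isClosed_latticeSet.isCompact, hne, hm.restrict hmono fun z hz h =>
    hm.nonpos_of_nonpos_on_latticeSet hmono hz h⟩

end IsSeqMF

theorem ContinuousMap.closure_submodule_eq_top_of_abs_mem {X : Type*} [TopologicalSpace X]
    [CompactSpace X] (S : Submodule ℝ C(X, ℝ)) (hone : 1 ∈ S) (habs : ∀ f ∈ S, |f| ∈ S)
    (hsep : ∀ x y, x ≠ y → ∃ f ∈ S, f x ≠ f y) : closure (S : Set C(X, ℝ)) = ⊤ := by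
  refine ContinuousMap.sublattice_closure_eq_top _ ⟨0, S.zero_mem⟩ (fun f hf g hg => ?_)
    (fun f hf g hg => ?_) fun v x y => ?_
  · rw [inf_eq_half_smul_add_sub_abs_sub' ℝ]
    exact S.smul_mem _ (S.sub_mem (S.add_mem hf hg) (habs _ (S.sub_mem hg hf)))
  · rw [sup_eq_half_smul_add_add_abs_sub' ℝ]
    exact S.smul_mem _ (S.add_mem (S.add_mem hf hg) (habs _ (S.sub_mem hg hf)))
  · by_cases hxy : x = y
    · subst hxy
      exact ⟨v x • 1, S.smul_mem _ hone, by simp, by simp⟩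
    · obtain ⟨f, hf, hfxy⟩ := hsep x y hxy
      set a := (v x - v y) / (f x - f y)
      refine ⟨a • f + (v x - a * f x) • 1, S.add_mem (S.smul_mem _ hf) (S.smul_mem _ hone),
        by simp, ?_⟩
      have : f x - f y ≠ 0 := sub_ne_zero.2 hfxy
      simp only [ContinuousMap.add_apply, ContinuousMap.smul_apply, ContinuousMap.one_apply,
        smul_eq_mul, mul_one, a]
      field_simp
      ring

theorem IsSeqMF.dense_image_XR {W : Type*} [TopologicalSpace W] [CompactSpace W]
    {m : (ℕ → ℝ) → C(W, ℝ)} (hm : IsSeqMF In m) (hmono : Monotone In) (hmin : SMFMinimal In m) :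
    Dense (m '' XR In) := by
  have huniv := hm.latticeSet_eq_univ hmono hmin.2
  have hrange : (LinearMap.range (hm.toLinearMap hmono) : Set C(W, ℝ)) = m '' XR In := by
    ext f
    exact ⟨fun ⟨z, hz⟩ => ⟨z, z.2, hz⟩, fun ⟨z, hz, h⟩ => ⟨⟨z, hz⟩, h⟩⟩
  rw [← hrange, dense_iff_closure_eq]
  refine ContinuousMap.closure_submodule_eq_top_of_abs_mem _
    ⟨⟨cardSeq In, cardSeq_mem_XR hmono⟩, hm.map_cardSeq⟩ ?_ fun x y hxy => ?_
  · rintro _ ⟨z, rfl⟩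
    refine ⟨⟨|z.1|, abs_mem_XR hmono z.2⟩, ContinuousMap.ext fun w => le_antisymm ?_
      (hm.abs_apply_le_apply_abs hmono z.2 w)⟩
    exact (huniv ▸ Set.mem_univ w : w ∈ latticeSet In m) z z.2
  · obtain ⟨z, hz, hne⟩ := hmin.1 x y hxy
    exact ⟨m z, ⟨⟨z, hz⟩, rfl⟩, hne⟩

end

theorem stmt13_general {ι : Type*}
    (In : ℕ → Finset ι) (hmono : Monotone In)
    {W : Type*} [TopologicalSpace W] [CompactSpace W]
    (m : (ℕ → ℝ) → C(W, ℝ)) (hm : IsSeqMF In m) (hmin : SMFMinimal In m)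
    (f : C(W, ℝ)) (ε : ℝ) (hε : 0 < ε) :
    ∃ x ∈ XR In, ∀ w : W, |m x w - f w| < ε := by
  obtain ⟨_, ⟨x, hx, rfl⟩, hfx⟩ := (hm.dense_image_XR hmono hmin).exists_dist_lt f hε
  refine ⟨x, hx, fun w => ?_⟩
  rw [abs_sub_comm, ← Real.dist_eq]
  exact (ContinuousMap.dist_apply_le_dist w).trans_lt hfx

/-- Density of range: for a minimal sequence measure function `m`, the
range of `m` is uniformly dense in `C(W, ℝ)`: for every continuous `f : W → ℝ` and
`ε > 0` there is `x ∈ X^ℝ` with `sup_w |m x w − f w| < ε`. -/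
theorem stmt13 {ι : Type*} [Countable ι] [Infinite ι]
    (In : ℕ → Finset ι) (hmono : Monotone In) (hcover : ∀ i : ι, ∃ n, i ∈ In n)
    {W : Type*} [TopologicalSpace W] [CompactSpace W] [T2Space W]
    (m : (ℕ → ℝ) → C(W, ℝ)) (hm : IsSeqMF In m) (hmin : SMFMinimal In m)
    (f : C(W, ℝ)) (ε : ℝ) (hε : 0 < ε) :
    ∃ x ∈ XR In, ∀ w : W, |m x w - f w| < ε :=
  stmt13_general In hmono m hm hmin f ε hε

end
end

section
/- Let I be a countable set and d a quasi-distance on I with finite upper density. Then the set C of non-expansive bounded operators on ℓ²(I) is: (1) closed under addition and scalar multiplication (if A, B ∈ C and c ∈ ℂ then A + B ∈ C and cA ∈ C); (2) closed under composition (if A, B ∈ C then AB ∈ C); (3) closed in the operator norm topology (if A_k ∈ C and ‖A − A_k‖ → 0 then A ∈ C); and it is invariant under taking adjoints. Consequently C is a C*-subalgebra of the bounded operators on ℓ²(I). -/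
open Filter Topology

noncomputable section

/-- `δ i`: the canonical orthonormal basis of `ℓ²(I)`. -/
def del (ι : Type*) (i : ι) : lp (fun _ : ι => ℂ) 2 :=
  letI := Classical.decEq ι
  lp.single 2 i (1 : ℂ)

/-- `d` is a quasi-distance on `ι`. -/
def IsQuasiDist {ι : Type*} (d : ι → ι → ℝ) : Prop :=
  (∀ i j, 0 ≤ d i j) ∧ (∀ i, d i i = 0) ∧ (∀ i j, d i j = d j i) ∧
  (∀ i j k, d i j ≤ d i k + d k j)

/-- `(ι, d)` has finite upper density: `sup_i |B_R(i)| < ∞` for every `R > 0`. -/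
def FinUpperDensity {ι : Type*} (d : ι → ι → ℝ) : Prop :=
  ∀ R > (0 : ℝ), ∃ C : ℕ, ∀ i : ι,
    {j : ι | d i j ≤ R}.Finite ∧ {j : ι | d i j ≤ R}.ncard ≤ C

/-- A bounded operator `A` on `ℓ²(I)` is row non-expansive: for every `ε > 0` there is
`N > 0` with `∑_{j ∉ B_N(i)} |⟨Aδᵢ, δⱼ⟩|² < ε` for all `i`. -/
def RowNonExp {ι : Type*} (d : ι → ι → ℝ)
    (A : lp (fun _ : ι => ℂ) 2 →L[ℂ] lp (fun _ : ι => ℂ) 2) : Prop :=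
  ∀ ε > (0 : ℝ), ∃ N > (0 : ℝ), ∀ i : ι,
    ∑' j : {j : ι // N < d i j}, ‖(inner ℂ (A (del ι i)) (del ι (j : ι)) : ℂ)‖ ^ 2 < ε

/-- `A` is non-expansive if both `A` and `A*` are row non-expansive. -/
def NonExp {ι : Type*} (d : ι → ι → ℝ)
    (A : lp (fun _ : ι => ℂ) 2 →L[ℂ] lp (fun _ : ι => ℂ) 2) : Prop :=
  RowNonExp d A ∧ RowNonExp d (ContinuousLinearMap.adjoint A)

/-!
Let `P` restrict coordinates to the complement of a ball. Row non-expansiveness of `A` says that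
`‖P_{B_N(i)ᶜ} (A δᵢ)‖ → 0` as `N → ∞`, uniformly in `i`; in this form sums, scalar multiples and
norm limits are handled by the triangle inequality, and adjoints by the symmetry of the definition.
For a product, split `x = B δᵢ` into its restriction to `B_{N₂}(i)` and the rest. The rest is small
and `A` is bounded. The restriction is a combination of the `δₖ` with `d(i,k) ≤ N₂`, by finite upper
density at most `C` of them, each with `‖xₖ‖ ≤ ‖B‖`; and since `B_{N₁+N₂}(i)ᶜ ⊆ B_{N₁}(k)ᶜ`, the
far part of each `A δₖ` is small.
-/

open scoped lp ENNReal

namespace lp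

variable {ι : Type*} (𝕜 : Type*) {E : Type*} [NormedField 𝕜] [NormedAddCommGroup E]
  [NormedSpace 𝕜 E] {p : ℝ≥0∞}

def restrict (s : Set ι) : ℓ^p(ι, E) →ₗ[𝕜] ℓ^p(ι, E) where
  toFun x := ⟨s.indicator x, (lp.memℓp x).mono' fun _ => norm_indicator_le_norm_self _ _⟩
  map_add' x y := by ext1; exact s.indicator_add x y
  map_smul' c x := by ext1; exact s.indicator_const_smul c x

variable {𝕜}

@[simp]
theorem coe_restrict (s : Set ι) (x : ℓ^p(ι, E)) : ⇑(restrict 𝕜 s x) = s.indicator x := rfl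

theorem restrict_add_restrict_compl (s : Set ι) (x : ℓ^p(ι, E)) :
    restrict 𝕜 s x + restrict 𝕜 sᶜ x = x := by
  ext1; exact s.indicator_self_add_compl x

theorem norm_restrict_le (hp : p ≠ 0) (s : Set ι) (x : ℓ^p(ι, E)) : ‖restrict 𝕜 s x‖ ≤ ‖x‖ :=
  lp.norm_mono hp fun _ => norm_indicator_le_norm_self _ _

theorem norm_restrict_mono (hp : p ≠ 0) {s t : Set ι} (hst : s ⊆ t) (x : ℓ^p(ι, E)) :
    ‖restrict 𝕜 s x‖ ≤ ‖restrict 𝕜 t x‖ :=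
  lp.norm_mono hp fun _ => norm_indicator_le_of_subset hst _ _

theorem sq_norm_restrict (s : Set ι) (x : ℓ²(ι, E)) :
    ‖restrict 𝕜 s x‖ ^ 2 = ∑' j : s, ‖x j‖ ^ 2 := by
  have h := lp.norm_rpow_eq_tsum (by norm_num : 0 < (2 : ℝ≥0∞).toReal) (restrict 𝕜 s x)
  simp only [ENNReal.toReal_ofNat, Real.rpow_two, coe_restrict] at h
  rw [h, tsum_subtype s fun j => ‖x j‖ ^ 2]
  congr 1 with j
  by_cases hj : j ∈ s <;> simp [hj]

end lp

section Basis

variable {ι : Type*}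

theorem norm_inner_del (x : ℓ²(ι, ℂ)) (j : ι) : ‖(inner ℂ x (del ι j) : ℂ)‖ = ‖x j‖ := by
  classical
  simp [del, lp.inner_single_right]

theorem norm_del (i : ι) : ‖del ι i‖ = 1 := by
  classical
  simp [del, lp.norm_single]

theorem restrict_finset_eq_sum (S : Finset ι) (x : ℓ²(ι, ℂ)) :
    lp.restrict ℂ (↑S) x = ∑ k ∈ S, x k • del ι k := by
  classical
  ext1; funext j
  rw [lp.coeFn_sum, Finset.sum_apply]
  simp [del, Set.indicator_apply, lp.single_apply, Pi.single_apply]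

end Basis

def distBall {ι : Type*} (d : ι → ι → ℝ) (i : ι) (R : ℝ) : Set ι := {j | d i j ≤ R}

theorem norm_map_restrict_finset_le {ι F : Type*} [SeminormedAddCommGroup F] [NormedSpace ℂ F]
    (L : ℓ²(ι, ℂ) →ₗ[ℂ] F) (S : Finset ι) {η : ℝ} (hL : ∀ k ∈ S, ‖L (del ι k)‖ ≤ η)
    (x : ℓ²(ι, ℂ)) : ‖L (lp.restrict ℂ (↑S) x)‖ ≤ S.card * ‖x‖ * η := by
  rw [restrict_finset_eq_sum, map_sum]
  calc ‖∑ k ∈ S, L (x k • del ι k)‖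
      ≤ ∑ k ∈ S, ‖x k‖ * ‖L (del ι k)‖ := by
        refine norm_sum_le_of_le S fun k _ => ?_
        rw [map_smul, norm_smul]
    _ ≤ ∑ _k ∈ S, ‖x‖ * η := by
        gcongr with k hk
        · exact lp.norm_apply_le_norm two_ne_zero x k
        · exact hL k hk
    _ = S.card * ‖x‖ * η := by rw [Finset.sum_const, nsmul_eq_mul, mul_assoc]

section Operators

variable {ι : Type*} {d : ι → ι → ℝ} {A B : ℓ²(ι, ℂ) →L[ℂ] ℓ²(ι, ℂ)}

theorem norm_apply_del_le (A : ℓ²(ι, ℂ) →L[ℂ] ℓ²(ι, ℂ)) (i : ι) : ‖A (del ι i)‖ ≤ ‖A‖ := by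
  simpa [norm_del] using A.le_opNorm (del ι i)

theorem compl_distBall (d : ι → ι → ℝ) (i : ι) (R : ℝ) : (distBall d i R)ᶜ = {j | R < d i j} := by
  ext j; simp [distBall]

theorem sq_norm_restrict_compl_distBall (i : ι) (N : ℝ) (x : ℓ²(ι, ℂ)) :
    ‖lp.restrict ℂ (distBall d i N)ᶜ x‖ ^ 2
      = ∑' j : {j : ι // N < d i j}, ‖(inner ℂ x (del ι j) : ℂ)‖ ^ 2 := by
  rw [lp.sq_norm_restrict, compl_distBall]
  simp_rw [norm_inner_del]
  rfl

theorem rowNonExp_iff : RowNonExp d A ↔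
    ∀ ε > (0 : ℝ), ∃ N > (0 : ℝ), ∀ i, ‖lp.restrict ℂ (distBall d i N)ᶜ (A (del ι i))‖ < ε := by
  simp_rw [RowNonExp, ← sq_norm_restrict_compl_distBall]
  refine ⟨fun h ε hε => ?_, fun h ε hε => ?_⟩
  · obtain ⟨N, hN, hi⟩ := h (ε ^ 2) (by positivity)
    exact ⟨N, hN, fun i => (pow_lt_pow_iff_left₀ (norm_nonneg _) hε.le two_ne_zero).1 (hi i)⟩
  · obtain ⟨N, hN, hi⟩ := h (√ε) (Real.sqrt_pos.2 hε)
    exact ⟨N, hN, fun i => (Real.lt_sqrt (norm_nonneg _)).1 (hi i)⟩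

theorem distBall_compl_subset (htri : ∀ i j k, d i j ≤ d i k + d k j) {i k : ι} {N₁ N₂ : ℝ}
    (hk : k ∈ distBall d i N₂) : (distBall d i (N₁ + N₂))ᶜ ⊆ (distBall d k N₁)ᶜ := by
  intro j hj hjk
  have hik : d i k ≤ N₂ := hk
  have hkj : d k j ≤ N₁ := hjk
  exact hj (show d i j ≤ N₁ + N₂ by linarith [htri i j k])

theorem norm_restrict_compl_distBall_apply_le (htri : ∀ i j k, d i j ≤ d i k + d k j)
    {i : ι} {N₁ N₂ η : ℝ} {S : Finset ι} (hS : ↑S = distBall d i N₂)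
    (hA : ∀ k, ‖lp.restrict ℂ (distBall d k N₁)ᶜ (A (del ι k))‖ ≤ η) (x : ℓ²(ι, ℂ)) :
    ‖lp.restrict ℂ (distBall d i (N₁ + N₂))ᶜ (A x)‖
      ≤ S.card * ‖x‖ * η + ‖A‖ * ‖lp.restrict ℂ (distBall d i N₂)ᶜ x‖ := by
  set P : ℓ²(ι, ℂ) →ₗ[ℂ] ℓ²(ι, ℂ) := lp.restrict ℂ (distBall d i (N₁ + N₂))ᶜ
  have hnear : ‖P (A (lp.restrict ℂ (↑S) x))‖ ≤ S.card * ‖x‖ * η :=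
    norm_map_restrict_finset_le (P ∘ₗ A.toLinearMap) S (fun k hk =>
      (lp.norm_restrict_mono two_ne_zero (distBall_compl_subset htri (hS ▸ hk)) _).trans (hA k)) x
  have hfar : ‖P (A (lp.restrict ℂ (↑S)ᶜ x))‖ ≤ ‖A‖ * ‖lp.restrict ℂ (distBall d i N₂)ᶜ x‖ :=
    hS ▸ (lp.norm_restrict_le two_ne_zero _ _).trans (A.le_opNorm _)
  calc ‖P (A x)‖
      = ‖P (A (lp.restrict ℂ (↑S) x)) + P (A (lp.restrict ℂ (↑S)ᶜ x))‖ := by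
        rw [← map_add, ← map_add, lp.restrict_add_restrict_compl]
    _ ≤ _ := (norm_add_le _ _).trans (add_le_add hnear hfar)

namespace RowNonExp

theorem add (hA : RowNonExp d A) (hB : RowNonExp d B) : RowNonExp d (A + B) := by
  rw [rowNonExp_iff] at *
  intro ε hε
  obtain ⟨N₁, hN₁, h₁⟩ := hA (ε / 2) (half_pos hε)
  obtain ⟨N₂, hN₂, h₂⟩ := hB (ε / 2) (half_pos hε)
  refine ⟨max N₁ N₂, lt_max_of_lt_left hN₁, fun i => ?_⟩
  have hmono {N : ℝ} (hN : N ≤ max N₁ N₂) : (distBall d i (max N₁ N₂))ᶜ ⊆ (distBall d i N)ᶜ :=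
    Set.compl_subset_compl.2 fun j hj => le_trans hj hN
  calc _ ≤ ‖lp.restrict ℂ (distBall d i (max N₁ N₂))ᶜ (A (del ι i))‖
        + ‖lp.restrict ℂ (distBall d i (max N₁ N₂))ᶜ (B (del ι i))‖ := by
        rw [add_apply, map_add]; exact norm_add_le _ _
    _ < ε / 2 + ε / 2 := add_lt_add
        ((lp.norm_restrict_mono two_ne_zero (hmono (le_max_left _ _)) _).trans_lt (h₁ i))
        ((lp.norm_restrict_mono two_ne_zero (hmono (le_max_right _ _)) _).trans_lt (h₂ i))
    _ = ε := add_halves ε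

theorem smul (c : ℂ) (hA : RowNonExp d A) : RowNonExp d (c • A) := by
  rw [rowNonExp_iff] at *
  intro ε hε
  obtain ⟨δ, hδ, hcδ⟩ := exists_pos_mul_lt hε ‖c‖
  obtain ⟨N, hN, h⟩ := hA δ hδ
  refine ⟨N, hN, fun i => ?_⟩
  rw [smul_apply, map_smul, norm_smul]
  exact (mul_le_mul_of_nonneg_left (h i).le (norm_nonneg c)).trans_lt hcδ

theorem comp (htri : ∀ i j k, d i j ≤ d i k + d k j) (hfud : FinUpperDensity d)
    (hA : RowNonExp d A) (hB : RowNonExp d B) : RowNonExp d (A.comp B) := by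
  rw [rowNonExp_iff] at *
  intro ε hε
  obtain ⟨ε₁, hε₁, hAε₁⟩ := exists_pos_mul_lt (half_pos hε) ‖A‖
  obtain ⟨N₂, hN₂, hBtail⟩ := hB ε₁ hε₁
  obtain ⟨C, hC⟩ := hfud N₂ hN₂
  obtain ⟨ε₂, hε₂, hCε₂⟩ := exists_pos_mul_lt (half_pos hε) (C * ‖B‖)
  obtain ⟨N₁, hN₁, hAtail⟩ := hA ε₂ hε₂
  refine ⟨N₁ + N₂, add_pos hN₁ hN₂, fun i => ?_⟩
  have hS := (hC i).1.coe_toFinset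
  have hcard : ((hC i).1.toFinset.card : ℝ) ≤ C := by
    rw [← Set.ncard_eq_toFinset_card _ (hC i).1]; exact_mod_cast (hC i).2
  calc _ ≤ _ := norm_restrict_compl_distBall_apply_le htri hS (fun k => (hAtail k).le)
        (B (del ι i))
    _ ≤ C * ‖B‖ * ε₂ + ‖A‖ * ε₁ := by gcongr; exacts [norm_apply_del_le B i, (hBtail i).le]
    _ < ε / 2 + ε / 2 := add_lt_add hCε₂ hAε₁
    _ = ε := add_halves ε

end RowNonExp

theorem isClosed_setOf_rowNonExp :
    IsClosed {A : ℓ²(ι, ℂ) →L[ℂ] ℓ²(ι, ℂ) | RowNonExp d A} := by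
  refine isClosed_of_closure_subset fun A hA => ?_
  rw [Metric.mem_closure_iff] at hA
  show RowNonExp d A
  rw [rowNonExp_iff]
  intro ε hε
  obtain ⟨B, hB, hAB⟩ := hA (ε / 2) (half_pos hε)
  obtain ⟨N, hN, h⟩ := rowNonExp_iff.1 hB (ε / 2) (half_pos hε)
  refine ⟨N, hN, fun i => ?_⟩
  set P : ℓ²(ι, ℂ) →ₗ[ℂ] ℓ²(ι, ℂ) := lp.restrict ℂ (distBall d i N)ᶜ
  have hdiff : ‖P ((A - B) (del ι i))‖ ≤ ‖A - B‖ :=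
    (lp.norm_restrict_le two_ne_zero _ _).trans (norm_apply_del_le (A - B) i)
  calc ‖P (A (del ι i))‖ = ‖P ((A - B) (del ι i)) + P (B (del ι i))‖ := by
        rw [← map_add, sub_apply, sub_add_cancel]
    _ ≤ ‖A - B‖ + ‖P (B (del ι i))‖ := (norm_add_le _ _).trans (add_le_add_left hdiff _)
    _ < ε / 2 + ε / 2 := add_lt_add (by rwa [← dist_eq_norm]) (h i)
    _ = ε := add_halves ε

namespace NonExp

theorem add (hA : NonExp d A) (hB : NonExp d B) : NonExp d (A + B) :=
  ⟨hA.1.add hB.1, by rw [map_add]; exact hA.2.add hB.2⟩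

theorem smul (c : ℂ) (hA : NonExp d A) : NonExp d (c • A) :=
  ⟨hA.1.smul c, by rw [LinearIsometryEquiv.map_smulₛₗ]; exact hA.2.smul _⟩

theorem comp (htri : ∀ i j k, d i j ≤ d i k + d k j) (hfud : FinUpperDensity d)
    (hA : NonExp d A) (hB : NonExp d B) : NonExp d (A.comp B) :=
  ⟨hA.1.comp htri hfud hB.1, by
    rw [ContinuousLinearMap.adjoint_comp]; exact hB.2.comp htri hfud hA.2⟩

theorem adjoint (hA : NonExp d A) : NonExp d (ContinuousLinearMap.adjoint A) :=
  ⟨hA.2, by rw [ContinuousLinearMap.adjoint_adjoint]; exact hA.1⟩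

end NonExp

theorem isClosed_setOf_nonExp :
    IsClosed {A : ℓ²(ι, ℂ) →L[ℂ] ℓ²(ι, ℂ) | NonExp d A} :=
  isClosed_setOf_rowNonExp.inter
    (isClosed_setOf_rowNonExp.preimage ContinuousLinearMap.adjoint.continuous)

end Operators

theorem stmt15_general {ι : Type*} (d : ι → ι → ℝ)
    (hd : IsQuasiDist d) (hfud : FinUpperDensity d) :
    (∀ A B : lp (fun _ : ι => ℂ) 2 →L[ℂ] lp (fun _ : ι => ℂ) 2,
      NonExp d A → NonExp d B → NonExp d (A + B)) ∧
    (∀ (c : ℂ) (A : lp (fun _ : ι => ℂ) 2 →L[ℂ] lp (fun _ : ι => ℂ) 2),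
      NonExp d A → NonExp d (c • A)) ∧
    (∀ A B : lp (fun _ : ι => ℂ) 2 →L[ℂ] lp (fun _ : ι => ℂ) 2,
      NonExp d A → NonExp d B → NonExp d (A.comp B)) ∧
    (∀ (A : lp (fun _ : ι => ℂ) 2 →L[ℂ] lp (fun _ : ι => ℂ) 2)
      (As : ℕ → (lp (fun _ : ι => ℂ) 2 →L[ℂ] lp (fun _ : ι => ℂ) 2)),
      (∀ k, NonExp d (As k)) → Tendsto (fun k => ‖A - As k‖) atTop (nhds 0) →
      NonExp d A) ∧
    (∀ A : lp (fun _ : ι => ℂ) 2 →L[ℂ] lp (fun _ : ι => ℂ) 2,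
      NonExp d A → NonExp d (ContinuousLinearMap.adjoint A)) := by
  refine ⟨fun _ _ => NonExp.add, fun c _ => NonExp.smul c, fun _ _ => NonExp.comp hd.2.2.2 hfud,
    fun A As hAs hlim => ?_, fun _ => NonExp.adjoint⟩
  have hAs_tendsto : Tendsto As atTop (𝓝 A) := by
    rw [tendsto_iff_norm_sub_tendsto_zero]
    simpa only [norm_sub_rev] using hlim
  exact isClosed_setOf_nonExp.mem_of_tendsto hAs_tendsto (Eventually.of_forall hAs)

/-- for a countable set `I` with a quasi-distance `d` of finite upper
density, the set `C` of non-expansive bounded operators on `ℓ²(I)` is closed under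
addition, scalar multiplication, composition, adjoints, and operator-norm limits;
consequently `C` is a C*-subalgebra of `B(ℓ²(I))`. -/
theorem stmt15 {ι : Type*} [Countable ι] (d : ι → ι → ℝ)
    (hd : IsQuasiDist d) (hfud : FinUpperDensity d) :
    (∀ A B : lp (fun _ : ι => ℂ) 2 →L[ℂ] lp (fun _ : ι => ℂ) 2,
      NonExp d A → NonExp d B → NonExp d (A + B)) ∧
    (∀ (c : ℂ) (A : lp (fun _ : ι => ℂ) 2 →L[ℂ] lp (fun _ : ι => ℂ) 2),
      NonExp d A → NonExp d (c • A)) ∧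
    (∀ A B : lp (fun _ : ι => ℂ) 2 →L[ℂ] lp (fun _ : ι => ℂ) 2,
      NonExp d A → NonExp d B → NonExp d (A.comp B)) ∧
    (∀ (A : lp (fun _ : ι => ℂ) 2 →L[ℂ] lp (fun _ : ι => ℂ) 2)
      (As : ℕ → (lp (fun _ : ι => ℂ) 2 →L[ℂ] lp (fun _ : ι => ℂ) 2)),
      (∀ k, NonExp d (As k)) → Tendsto (fun k => ‖A - As k‖) atTop (nhds 0) →
      NonExp d A) ∧
    (∀ A : lp (fun _ : ι => ℂ) 2 →L[ℂ] lp (fun _ : ι => ℂ) 2,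
      NonExp d A → NonExp d (ContinuousLinearMap.adjoint A)) :=
  stmt15_general d hd hfud

end
end
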